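/- arXiv:1205.7074 — 10 statements merged into one kernel-verified Lean document; each statement's English description precedes it below -/
import Mathlib

section
/- The promotion operator ∂_j on linear extensions of a finite poset P of size n equals the composition τ_j τ_{j+1} ⋯ τ_{n-1}, where τ_i swaps positions i and i+1 of a linear extension π if π_i and π_{i+1} are incomparable in P, and acts as the identity otherwise. -/
open scoped Classical

/-- A partial order on `Fin n`, given as a plain structure (so that the standard
linear order on `Fin n` is unaffected). -/
structure FinPoset (n : ℕ) where
  le : Fin n → Fin n → Prop
  le_refl : ∀ a, le a a
  le_trans : ∀ a b c, le a b → le b c → le a c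
  le_antisymm : ∀ a b, le a b → le b a → a = b

/-- The strict order associated to a `FinPoset`. -/
def FinPoset.lt {n : ℕ} (P : FinPoset n) (a b : Fin n) : Prop :=
  P.le a b ∧ a ≠ b

variable {n : ℕ}

/-- `tauOp P i π` is the operator `τ_i` (0-indexed) acting on the permutation `π`
(in one-line notation `π k` is the entry at position `k`): it swaps the entries at
positions `i` and `i+1` if they are incomparable in `P`, else fixes `π`. -/
noncomputable def tauOp (P : FinPoset n) (i : ℕ) (π : Equiv.Perm (Fin n)) :
    Equiv.Perm (Fin n) :=
  if h : i + 1 < n then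
    if ¬ P.le (π ⟨i, Nat.lt_of_succ_lt h⟩) (π ⟨i + 1, h⟩) ∧
        ¬ P.le (π ⟨i + 1, h⟩) (π ⟨i, Nat.lt_of_succ_lt h⟩) then
      π * Equiv.swap ⟨i, Nat.lt_of_succ_lt h⟩ ⟨i + 1, h⟩
    else π
  else π

/-- `π` is a linear extension of the poset `P` on `Fin n`: if `a ≺ b` in `P`
then the position of `a` precedes the position of `b`. -/
def IsLinearExtension (P : FinPoset n) (π : Equiv.Perm (Fin n)) : Prop :=
  ∀ a b : Fin n, P.lt a b → π.symm a < π.symm b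

/-- The extended promotion operator `∂_j = τ_j τ_{j+1} ⋯ τ_{n-2}` (0-indexed),
applied on the right to `π`. -/
noncomputable def promoOp (P : FinPoset n) (j : ℕ) (π : Equiv.Perm (Fin n)) :
    Equiv.Perm (Fin n) :=
  (List.range (n - 1 - j)).foldl (fun σ k => tauOp P (j + k) σ) π

/-- `y` covers `x` in `P`. -/
def IsCover (P : FinPoset n) (x y : Fin n) : Prop :=
  P.lt x y ∧ ∀ z : Fin n, P.lt x z → P.lt z y → False

/-- The set of covers of `x` in `P`. -/
noncomputable def coversOf (P : FinPoset n) (x : Fin n) : Finset (Fin n) :=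
  Finset.univ.filter (fun y => IsCover P x y)

/-- The next element in the jeu-de-taquin promotion chain: among the covers of `x`,
the one whose label (= position under `π`) is minimal; `x` itself if `x` has no cover. -/
noncomputable def nextEl (P : FinPoset n) (π : Equiv.Perm (Fin n)) (x : Fin n) :
    Fin n :=
  if h : (coversOf P x).Nonempty then
    π (((coversOf P x).image π.symm).min' (h.image _))
  else x

/-- The promotion chain with seed the label `j` (sitting at the element `π j`):
repeatedly move to the cover carrying the minimal label. -/
noncomputable def chainSeq (P : FinPoset n) (π : Equiv.Perm (Fin n)) (j : Fin n) :
    ℕ → Fin n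
  | 0 => π j
  | t + 1 => nextEl P π (chainSeq P π j t)

/-- The labelling (element `x` ↦ its new label, i.e. its new position, as a natural
number) produced by the jeu-de-taquin style promotion algorithm with seed `j` on the
linear extension `π` (all 0-indexed).  The label of each element of the promotion
chain is slid down from its successor in the chain, the terminal (locally maximal)
element of the chain receives the label `n`, and finally all labels strictly larger
than `j` are decreased by `1`. -/
noncomputable def promoAlgLabel (P : FinPoset n) (π : Equiv.Perm (Fin n))
    (j : Fin n) (x : Fin n) : ℕ :=
  let μ : ℕ :=
    if ∃ t, t < n ∧ chainSeq P π j t = x then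
      if (coversOf P x).Nonempty then ((π.symm (nextEl P π x) : ℕ)) else n
    else (π.symm x : ℕ)
  if (j : ℕ) < μ then μ - 1 else μ

-- ==== auxiliary lemmas ====

lemma exists_cover_le (P : FinPoset n) (π : Equiv.Perm (Fin n))
    (hπ : IsLinearExtension P π) {x z : Fin n} (hxz : P.lt x z) :
    ∃ w, IsCover P x w ∧ P.le w z := by
  classical
  set S : Finset (Fin n) := Finset.univ.filter (fun w => P.lt x w ∧ P.le w z) with hS
  have hz : z ∈ S := by simp [hS, hxz, P.le_refl]
  obtain ⟨w, hwS, hwmin⟩ := S.exists_min_image (fun w => (π.symm w : ℕ)) ⟨z, hz⟩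
  simp only [hS, Finset.mem_filter] at hwS
  refine ⟨w, ⟨hwS.2.1, ?_⟩, hwS.2.2⟩
  intro u hxu huw
  have huS : u ∈ S := by
    simp only [hS, Finset.mem_filter]
    exact ⟨Finset.mem_univ _, hxu, P.le_trans _ _ _ huw.1 hwS.2.2⟩
  have h1 := hwmin u huS
  have h2 : (π.symm u : ℕ) < (π.symm w : ℕ) := hπ u w huw
  omega

lemma nextEl_mem_covers (P : FinPoset n) (π : Equiv.Perm (Fin n)) {x : Fin n}
    (h : (coversOf P x).Nonempty) : nextEl P π x ∈ coversOf P x := by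
  rw [nextEl, dif_pos h]
  have hm := Finset.min'_mem ((coversOf P x).image π.symm) (h.image _)
  obtain ⟨y, hy, hy2⟩ := Finset.mem_image.mp hm
  rw [← hy2, Equiv.apply_symm_apply]
  exact hy

lemma nextEl_lt (P : FinPoset n) (π : Equiv.Perm (Fin n)) {x : Fin n}
    (h : (coversOf P x).Nonempty) : P.lt x (nextEl P π x) := by
  have := nextEl_mem_covers P π h
  simp only [coversOf, Finset.mem_filter] at this
  exact this.2.1

lemma nextEl_min (P : FinPoset n) (π : Equiv.Perm (Fin n))
    (hπ : IsLinearExtension P π) {x : Fin n} (h : (coversOf P x).Nonempty)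
    {z : Fin n} (hz : P.lt x z) :
    (π.symm (nextEl P π x) : ℕ) ≤ (π.symm z : ℕ) := by
  obtain ⟨w, hw, hwz⟩ := exists_cover_le P π hπ hz
  have hwmem : π.symm w ∈ (coversOf P x).image π.symm :=
    Finset.mem_image_of_mem _ (by simp [coversOf, hw])
  have h1 : (((coversOf P x).image π.symm).min' (h.image _) : ℕ) ≤ (π.symm w : ℕ) :=
    Finset.min'_le _ _ hwmem
  have h2 : (π.symm w : ℕ) ≤ (π.symm z : ℕ) := by
    rcases eq_or_ne w z with rfl | hne
    · exact le_refl _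
    · exact le_of_lt (hπ w z ⟨hwz, hne⟩)
  have h3 : (π.symm (nextEl P π x) : ℕ)
      = (((coversOf P x).image π.symm).min' (h.image _) : ℕ) := by
    rw [nextEl, dif_pos h, Equiv.symm_apply_apply]
  omega

noncomputable def qpos (P : FinPoset n) (π : Equiv.Perm (Fin n)) (j : Fin n) (s : ℕ) : ℕ :=
  (π.symm (chainSeq P π j s) : ℕ)

lemma qpos_step (P : FinPoset n) (π : Equiv.Perm (Fin n)) (j : Fin n)
    (hπ : IsLinearExtension P π) {s : ℕ}
    (h : (coversOf P (chainSeq P π j s)).Nonempty) :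
    qpos P π j s < qpos P π j (s + 1) := by
  have h2 := hπ _ _ (nextEl_lt P π h)
  simpa [qpos, chainSeq] using h2

lemma qpos_zero (P : FinPoset n) (π : Equiv.Perm (Fin n)) (j : Fin n) :
    qpos P π j 0 = (j : ℕ) := by
  simp [qpos, chainSeq]

def PromoInv (P : FinPoset n) (π : Equiv.Perm (Fin n)) (j : Fin n) (i : ℕ)
    (σ : Equiv.Perm (Fin n)) : Prop :=
  ∃ t : ℕ,
    (∀ s, s < t → (coversOf P (chainSeq P π j s)).Nonempty) ∧
    qpos P π j t ≤ i ∧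
    (∀ p, ∀ hp : p < n, qpos P π j t < p → p ≤ i →
        ¬ P.lt (chainSeq P π j t) (π ⟨p, hp⟩)) ∧
    (∀ k : Fin n, (k : ℕ) < (j : ℕ) → σ k = π k) ∧
    (∀ k : Fin n, i < (k : ℕ) → σ k = π k) ∧
    (∀ hi : i < n, σ ⟨i, hi⟩ = chainSeq P π j t) ∧
    (∀ s, s < t → ∀ h : qpos P π j (s + 1) - 1 < n,
        σ ⟨qpos P π j (s + 1) - 1, h⟩ = chainSeq P π j s) ∧
    (∀ k, ∀ hk1 : k + 1 < n, (j : ℕ) ≤ k → k < i →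
        (∀ s, s < t → qpos P π j (s + 1) ≠ k + 1) →
        σ ⟨k, Nat.lt_of_succ_lt hk1⟩ = π ⟨k + 1, hk1⟩)

lemma inv_base (P : FinPoset n) (π : Equiv.Perm (Fin n)) (j : Fin n) :
    PromoInv P π j (j : ℕ) π := by
  refine ⟨0, by omega, by rw [qpos_zero], ?_, fun _ _ => rfl, fun _ _ => rfl, ?_, by omega, ?_⟩
  · intro p hp h1 h2; rw [qpos_zero] at h1; omega
  · intro hi
    have : (⟨(j : ℕ), hi⟩ : Fin n) = j := rfl
    rw [this]; rfl
  · intro k _ h1 h2 _; omega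

lemma qpos_mono (P : FinPoset n) (π : Equiv.Perm (Fin n)) (j : Fin n)
    (hπ : IsLinearExtension P π) {t : ℕ}
    (ha : ∀ s, s < t → (coversOf P (chainSeq P π j s)).Nonempty) :
    ∀ a b, a < b → b ≤ t → qpos P π j a < qpos P π j b := by
  intro a b
  induction b with
  | zero => omega
  | succ b ih =>
    intro hab hbt
    have hstep : qpos P π j b < qpos P π j (b + 1) := qpos_step P π j hπ (ha b (by omega))
    rcases Nat.lt_succ_iff_lt_or_eq.mp hab with h | rfl
    · exact lt_trans (ih h (by omega)) hstep
    · exact hstep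

lemma inv_step (P : FinPoset n) (π : Equiv.Perm (Fin n)) (j : Fin n)
    (hπ : IsLinearExtension P π) {i : ℕ} (hi1 : i + 1 < n) (hij : (j : ℕ) ≤ i)
    {σ : Equiv.Perm (Fin n)} (h : PromoInv P π j i σ) :
    PromoInv P π j (i + 1) (tauOp P i σ) := by
  obtain ⟨t, ha, hb, hc, hd1, hd2, hd3, hd4a, hd4b⟩ := h
  have hi : i < n := Nat.lt_of_succ_lt hi1
  have hσi : σ ⟨i, Nat.lt_of_succ_lt hi1⟩ = chainSeq P π j t := hd3 _
  have hσi1 : σ ⟨i + 1, hi1⟩ = π ⟨i + 1, hi1⟩ := hd2 _ (by simp)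
  have hne : π ⟨i + 1, hi1⟩ ≠ chainSeq P π j t := by
    intro e
    have : σ ⟨i + 1, hi1⟩ = σ ⟨i, Nat.lt_of_succ_lt hi1⟩ := by rw [hσi, hσi1, e]
    have := σ.injective this
    simp [Fin.ext_iff] at this
  have hsymmy : (π.symm (π ⟨i + 1, hi1⟩) : ℕ) = i + 1 := by rw [Equiv.symm_apply_apply]
  have hnotyx : ¬ P.le (π ⟨i + 1, hi1⟩) (chainSeq P π j t) := by
    intro hle
    have h2 : (π.symm (π ⟨i + 1, hi1⟩) : ℕ) < (π.symm (chainSeq P π j t) : ℕ) :=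
      hπ _ _ ⟨hle, hne⟩
    have h3 : (π.symm (chainSeq P π j t) : ℕ) = qpos P π j t := rfl
    omega
  by_cases hcomp : P.le (chainSeq P π j t) (π ⟨i + 1, hi1⟩)
  · -- comparable case: no swap, the chain advances
    have hlt : P.lt (chainSeq P π j t) (π ⟨i + 1, hi1⟩) := ⟨hcomp, Ne.symm hne⟩
    have hcov : (coversOf P (chainSeq P π j t)).Nonempty := by
      obtain ⟨w, hw, _⟩ := exists_cover_le P π hπ hlt
      exact ⟨w, by simp [coversOf, hw]⟩
    have habove : ∀ z, P.lt (chainSeq P π j t) z → i + 1 ≤ (π.symm z : ℕ) := by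
      intro z hz
      by_contra hcon
      push_neg at hcon
      have hq : qpos P π j t < (π.symm z : ℕ) := hπ _ z hz
      have hz2 := hc (π.symm z : ℕ) (π.symm z).isLt hq (by omega)
      have he : π ⟨(π.symm z : ℕ), (π.symm z).isLt⟩ = z := by
        have he2 : (⟨(π.symm z : ℕ), (π.symm z).isLt⟩ : Fin n) = π.symm z := rfl
        rw [he2, Equiv.apply_symm_apply]
      rw [he] at hz2
      exact hz2 hz
    have hnext : nextEl P π (chainSeq P π j t) = π ⟨i + 1, hi1⟩ := by
      have h1 := nextEl_min P π hπ hcov hlt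
      have h2 := habove _ (nextEl_lt P π hcov)
      have h3 : (π.symm (nextEl P π (chainSeq P π j t)) : ℕ) = i + 1 := by omega
      have h4 : π.symm (nextEl P π (chainSeq P π j t)) = ⟨i + 1, hi1⟩ := Fin.ext h3
      rw [Equiv.symm_apply_eq] at h4
      exact h4
    have hc1 : chainSeq P π j (t + 1) = π ⟨i + 1, hi1⟩ := by
      simp only [chainSeq]; exact hnext
    have hq1 : qpos P π j (t + 1) = i + 1 := by
      show (π.symm (chainSeq P π j (t + 1)) : ℕ) = i + 1
      rw [hc1, hsymmy]
    have hτ : tauOp P i σ = σ := by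
      rw [tauOp, dif_pos hi1, if_neg]
      intro hcond
      rw [hσi, hσi1] at hcond
      exact hcond.1 hcomp
    refine ⟨t + 1, ?_, by omega, ?_, ?_, ?_, ?_, ?_, ?_⟩
    · intro s hs
      rcases Nat.lt_succ_iff_lt_or_eq.mp hs with h | rfl
      · exact ha s h
      · exact hcov
    · intro p hp h1 h2; omega
    · intro k hk; rw [hτ]; exact hd1 k hk
    · intro k hk; rw [hτ]; exact hd2 k (by omega)
    · intro hi'
      rw [hτ, hc1]
      exact hσi1
    · intro s hs hpos
      rw [hτ]
      rcases Nat.lt_succ_iff_lt_or_eq.mp hs with h | rfl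
      · exact hd4a s h hpos
      · have e : qpos P π j (s + 1) - 1 = i := by omega
        have e2 : (⟨qpos P π j (s + 1) - 1, hpos⟩ : Fin n)
            = ⟨i, Nat.lt_of_succ_lt hi1⟩ := Fin.ext e
        rw [e2]; exact hσi
    · intro k hk1 hkj hki hcond
      rw [hτ]
      rcases Nat.lt_succ_iff_lt_or_eq.mp hki with h | rfl
      · exact hd4b k hk1 hkj h (fun s hs => hcond s (by omega))
      · exact absurd hq1 (hcond t (by omega))
  · -- incomparable case: swap, chain element rides on
    have hτ : tauOp P i σ = σ * Equiv.swap ⟨i, Nat.lt_of_succ_lt hi1⟩ ⟨i + 1, hi1⟩ := by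
      rw [tauOp, dif_pos hi1, if_pos]
      constructor
      · rw [hσi, hσi1]; exact hcomp
      · rw [hσi, hσi1]; exact hnotyx
    have hswap : ∀ k : Fin n, (k : ℕ) ≠ i → (k : ℕ) ≠ i + 1 →
        (tauOp P i σ) k = σ k := by
      intro k h1 h2
      rw [hτ]
      simp only [Equiv.Perm.mul_apply]
      rw [Equiv.swap_apply_of_ne_of_ne]
      · intro e; exact h1 (by rw [e])
      · intro e; exact h2 (by rw [e])
    refine ⟨t, ha, by omega, ?_, ?_, ?_, ?_, ?_, ?_⟩
    · intro p hp h1 h2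
      rcases Nat.lt_succ_iff_lt_or_eq.mp (Nat.lt_succ_of_le h2) with h | rfl
      · exact hc p hp h1 (by omega)
      · intro hl
        exact hcomp hl.1
    · intro k hk
      rw [hswap k (by omega) (by omega)]
      exact hd1 k hk
    · intro k hk
      rw [hswap k (by omega) (by omega)]
      exact hd2 k (by omega)
    · intro hi'
      rw [hτ]
      simp only [Equiv.Perm.mul_apply]
      have e : (⟨i + 1, hi'⟩ : Fin n) = ⟨i + 1, hi1⟩ := rfl
      rw [e, Equiv.swap_apply_right]
      exact hσi
    · intro s hs hpos
      have hq2 : qpos P π j (s + 1) ≤ qpos P π j t := by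
        rcases lt_or_eq_of_le (Nat.succ_le_of_lt hs) with h | h
        · exact le_of_lt (qpos_mono P π j hπ ha (s + 1) t h (le_refl _))
        · rw [← h]
      have hq3 : qpos P π j s < qpos P π j (s + 1) := qpos_step P π j hπ (ha s hs)
      rw [hswap _ (by simp; omega) (by simp; omega)]
      exact hd4a s hs hpos
    · intro k hk1 hkj hki hcond
      rcases Nat.lt_succ_iff_lt_or_eq.mp hki with h | rfl
      · rw [hswap _ (by simp; omega) (by simp; omega)]
        exact hd4b k hk1 hkj h hcond
      · rw [hτ]
        simp only [Equiv.Perm.mul_apply]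
        have e : (⟨k, Nat.lt_of_succ_lt hk1⟩ : Fin n) = ⟨k, Nat.lt_of_succ_lt hi1⟩ := rfl
        rw [e, Equiv.swap_apply_left]
        rw [hσi1]

lemma inv_fold (P : FinPoset n) (π : Equiv.Perm (Fin n)) (j : Fin n)
    (hπ : IsLinearExtension P π) :
    ∀ d, (j : ℕ) + d ≤ n - 1 →
      PromoInv P π j ((j : ℕ) + d)
        ((List.range d).foldl (fun σ k => tauOp P ((j : ℕ) + k) σ) π) := by
  have hjn : (j : ℕ) < n := j.isLt
  intro d
  induction d with
  | zero => intro _; simpa using inv_base P π j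
  | succ d ih =>
    intro hd
    rw [List.range_succ, List.foldl_append, List.foldl_cons, List.foldl_nil]
    exact inv_step P π j hπ (i := (j : ℕ) + d) (by omega) (by omega) (ih (by omega))

lemma inv_promo (P : FinPoset n) (π : Equiv.Perm (Fin n)) (j : Fin n)
    (hπ : IsLinearExtension P π) :
    PromoInv P π j (n - 1) (promoOp P (j : ℕ) π) := by
  have hjn : (j : ℕ) < n := j.isLt
  have h := inv_fold P π j hπ (n - 1 - (j : ℕ)) (by omega)
  have e : (j : ℕ) + (n - 1 - (j : ℕ)) = n - 1 := by omega
  rw [e] at h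
  exact h

lemma chain_stab (P : FinPoset n) (π : Equiv.Perm (Fin n)) (j : Fin n) {m : ℕ}
    (hm : ¬ (coversOf P (chainSeq P π j m)).Nonempty) :
    ∀ s, m ≤ s → chainSeq P π j s = chainSeq P π j m := by
  intro s
  induction s with
  | zero => intro hs; rw [Nat.le_zero.mp hs]
  | succ s ih =>
    intro hs
    rcases Nat.lt_succ_iff_lt_or_eq.mp (Nat.lt_succ_of_le hs) with h | h
    · have ihs := ih (by omega)
      show nextEl P π (chainSeq P π j s) = chainSeq P π j m
      rw [ihs, nextEl, dif_neg hm]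
    · rw [h]


/-- The promotion operator `∂_j` defined by the jeu-de-taquin style algorithm
coincides with the composition `τ_j τ_{j+1} ⋯ τ_{n-1}`: the labelling of the poset
determined by `π ∂_j = π τ_j ⋯ τ_{n-1}` is exactly the one produced by the
algorithm. -/
theorem promotion_eq_tau_composition (P : FinPoset n) (j : Fin n)
    (π : Equiv.Perm (Fin n)) (hπ : IsLinearExtension P π) :
    (fun x : Fin n => (((promoOp P (j : ℕ) π).symm x : ℕ))) = promoAlgLabel P π j := by
  have hjn : (j : ℕ) < n := j.isLt
  obtain ⟨m, ha, hb, hc, hd1, hd2, hd3, hd4a, hd4b⟩ := inv_promo P π j hπ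
  have hcovm : ¬ (coversOf P (chainSeq P π j m)).Nonempty := by
    intro hcov
    have hst := qpos_step P π j hπ hcov
    have hlt' : P.lt (chainSeq P π j m) (chainSeq P π j (m + 1)) := nextEl_lt P π hcov
    have hq1 : qpos P π j (m + 1) < n := (π.symm (chainSeq P π j (m + 1))).isLt
    have h2 := hc (qpos P π j (m + 1)) hq1 hst (by omega)
    have he : (⟨qpos P π j (m + 1), hq1⟩ : Fin n) = π.symm (chainSeq P π j (m + 1)) := rfl
    rw [he, Equiv.apply_symm_apply] at h2
    exact h2 hlt'
  have hge : ∀ s, s ≤ m → (j : ℕ) + s ≤ qpos P π j s := by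
    intro s
    induction s with
    | zero => intro _; simp [qpos_zero]
    | succ s ih =>
      intro hs
      have h1 := ih (by omega)
      have h2 := qpos_step P π j hπ (ha s (by omega))
      omega
  have hmn : m < n := by
    have h1 := hge m (le_refl m)
    have h2 : qpos P π j m < n := (π.symm (chainSeq P π j m)).isLt
    omega
  funext x
  show ((promoOp P (j : ℕ) π).symm x : ℕ) = promoAlgLabel P π j x
  by_cases hx : ∃ t', t' < n ∧ chainSeq P π j t' = x
  · -- x is on the promotion chain
    have hxs : ∃ s, s ≤ m ∧ chainSeq P π j s = x := by
      obtain ⟨t', ht', he⟩ := hx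
      rcases le_or_gt t' m with h | h
      · exact ⟨t', h, he⟩
      · exact ⟨m, le_refl m, by rw [← chain_stab P π j hcovm t' (le_of_lt h)]; exact he⟩
    obtain ⟨s, hs, hse⟩ := hxs
    rcases lt_or_eq_of_le hs with hsm | rfl
    · -- non-terminal chain element
      have hcov : (coversOf P x).Nonempty := by rw [← hse]; exact ha s hsm
      have hnext : nextEl P π x = chainSeq P π j (s + 1) := by rw [← hse]; rfl
      have hq : (π.symm (nextEl P π x) : ℕ) = qpos P π j (s + 1) := by rw [hnext]; rfl
      have hjq : (j : ℕ) < qpos P π j (s + 1) := by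
        have := qpos_mono P π j hπ ha 0 (s + 1) (by omega) (by omega)
        rw [qpos_zero] at this
        exact this
      have hqn : qpos P π j (s + 1) < n := (π.symm (chainSeq P π j (s + 1))).isLt
      have hpos : qpos P π j (s + 1) - 1 < n := by omega
      have hσ := hd4a s hsm hpos
      rw [hse] at hσ
      have hsymm : (promoOp P (j : ℕ) π).symm x = ⟨qpos P π j (s + 1) - 1, hpos⟩ := by
        rw [Equiv.symm_apply_eq]; exact hσ.symm
      rw [hsymm]
      simp only [promoAlgLabel, if_pos hx, if_pos hcov, hq, if_pos hjq]
    · -- terminal chain element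
      have hcov : ¬ (coversOf P x).Nonempty := by rw [← hse]; exact hcovm
      have hn1 : n - 1 < n := by omega
      have hσ := hd3 hn1
      rw [hse] at hσ
      have hsymm : (promoOp P (j : ℕ) π).symm x = ⟨n - 1, hn1⟩ := by
        rw [Equiv.symm_apply_eq]; exact hσ.symm
      rw [hsymm]
      simp only [promoAlgLabel, if_pos hx, if_neg hcov, if_pos hjn]
  · -- x is not on the promotion chain
    have hne0 : ∀ s, s ≤ m → chainSeq P π j s ≠ x := by
      intro s hs e
      exact hx ⟨s, by omega, e⟩
    have hp : (π.symm x : ℕ) < n := (π.symm x).isLt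
    have hpj : (π.symm x : ℕ) ≠ (j : ℕ) := by
      intro e
      have h1 : π.symm x = j := Fin.ext e
      have h2 : chainSeq P π j 0 = x := by
        show π j = x
        rw [← h1, Equiv.apply_symm_apply]
      exact hne0 0 (by omega) h2
    rcases lt_or_gt_of_ne hpj with hlt | hgt
    · -- label smaller than j : untouched
      have hσ := hd1 (π.symm x) hlt
      rw [Equiv.apply_symm_apply] at hσ
      have hsymm : (promoOp P (j : ℕ) π).symm x = π.symm x := by
        rw [Equiv.symm_apply_eq]; exact hσ.symm
      rw [hsymm]
      simp only [promoAlgLabel, if_neg hx, if_neg (by omega : ¬ (j : ℕ) < (π.symm x : ℕ))]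
    · -- label larger than j : shifted down by one
      have hk1 : (π.symm x : ℕ) - 1 + 1 < n := by omega
      have hcond : ∀ s, s < m → qpos P π j (s + 1) ≠ (π.symm x : ℕ) - 1 + 1 := by
        intro s hsm e
        have e2 : qpos P π j (s + 1) = (π.symm x : ℕ) := by omega
        have e3 : π.symm (chainSeq P π j (s + 1)) = π.symm x := Fin.ext e2
        have e4 : chainSeq P π j (s + 1) = x := π.symm.injective e3
        exact hne0 (s + 1) (by omega) e4
      have hk3 : (j : ℕ) ≤ (π.symm x : ℕ) - 1 := by omega
      have hk4 : (π.symm x : ℕ) - 1 < n - 1 := by omega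
      have hσ := hd4b ((π.symm x : ℕ) - 1) hk1 hk3 hk4 hcond
      have he : (⟨(π.symm x : ℕ) - 1 + 1, hk1⟩ : Fin n) = π.symm x :=
        Fin.ext (show (π.symm x : ℕ) - 1 + 1 = (π.symm x : ℕ) by omega)
      rw [he, Equiv.apply_symm_apply] at hσ
      have hsymm : (promoOp P (j : ℕ) π).symm x
          = ⟨(π.symm x : ℕ) - 1, Nat.lt_of_succ_lt hk1⟩ := by
        rw [Equiv.symm_apply_eq]; exact hσ.symm
      rw [hsymm]
      simp only [promoAlgLabel, if_neg hx, if_pos (by omega : (j : ℕ) < (π.symm x : ℕ))]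
end

section
/- For a finite poset P on [n], the braid relations π τ_j τ_{j+1} τ_j = π τ_{j+1} τ_j τ_{j+1} hold for all 1 ≤ j < n−1 and all linear extensions π of P if and only if P is a disjoint union of chains. -/
open scoped Classical

variable {n : ℕ}

/-- `P` is a disjoint union of chains: the ground set can be partitioned (via the
fibers of a map `f`) into totally ordered subsets such that comparable elements
always lie in the same part. -/
def IsUnionOfChains (P : FinPoset n) : Prop :=
  ∃ f : Fin n → Fin n,
    (∀ a b : Fin n, f a = f b → (P.le a b ∨ P.le b a)) ∧
    (∀ a b : Fin n, P.le a b → f a = f b)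

/-!
The operators `τ_j` only see whether adjacent entries are comparable. Going through the eight
comparability patterns of three consecutive entries `x, y, z` shows that the braid relation fails
exactly when `x, z` are comparable and exactly one of the pairs `x, y` and `y, z` is. If
comparability is transitive, i.e. `P` is a disjoint union of chains, this never happens.
Otherwise there are `a, c` incomparable with a common upper (or lower) bound `b`; descending from
`b` produces an element with two distinct, hence incomparable, lower covers (dually upper
covers), and a linear extension listing these three elements consecutively breaks the relation.
-/

open Relation Equiv

section Covers

variable {α : Type*} [PartialOrder α]

theorem incompRel_of_covBy_of_covBy {u v w : α} (hu : u ⋖ w) (hv : v ⋖ w) (huv : u ≠ v) :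
    IncompRel (· ≤ ·) u v :=
  ⟨fun h ↦ hu.2 (h.lt_of_ne huv) hv.lt, fun h ↦ hv.2 (h.lt_of_ne huv.symm) hu.lt⟩

theorem lt_lt_or_gt_gt_of_incompRel {a b c : α} (hac : IncompRel (· ≤ ·) a c)
    (hab : SymmGen (· ≤ ·) a b) (hbc : SymmGen (· ≤ ·) b c) : a < b ∧ c < b ∨ b < a ∧ b < c := by
  have hab' : a ≠ b := by rintro rfl; exact hbc.elim hac.not_le hac.not_ge
  have hcb' : c ≠ b := by rintro rfl; exact hab.elim hac.not_le hac.not_ge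
  rcases hab with hab | hba <;> rcases hbc with hbc | hcb
  · exact absurd (hab.trans hbc) hac.not_le
  · exact Or.inl ⟨hab.lt_of_ne hab', hcb.lt_of_ne hcb'⟩
  · exact Or.inr ⟨hba.lt_of_ne hab'.symm, hbc.lt_of_ne hcb'.symm⟩
  · exact absurd (hcb.trans hba) hac.not_ge

variable [Finite α]

theorem exists_covBy_covBy_incompRel {a b c : α} (hab : a < b) (hcb : c < b)
    (hac : IncompRel (· ≤ ·) a c) : ∃ u v w : α, u ⋖ w ∧ v ⋖ w ∧ IncompRel (· ≤ ·) u v := by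
  induction b using WellFoundedLT.induction generalizing a c with
  | ind b ih =>
    obtain ⟨a', haa', ha'⟩ := exists_le_covBy_of_lt hab
    obtain ⟨c', hcc', hc'⟩ := exists_le_covBy_of_lt hcb
    obtain rfl | hne := eq_or_ne a' c'
    · have ha : a ≠ a' := by rintro rfl; exact hac.not_ge hcc'
      have hc : c ≠ a' := by rintro rfl; exact hac.not_le haa'
      exact ih a' ha'.lt (haa'.lt_of_ne ha) (hcc'.lt_of_ne hc) hac
    · exact ⟨a', c', b, ha', hc', incompRel_of_covBy_of_covBy ha' hc' hne⟩

theorem exists_covBy_covBy_incompRel' {a b c : α} (hba : b < a) (hbc : b < c)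
    (hac : IncompRel (· ≤ ·) a c) : ∃ u v w : α, w ⋖ u ∧ w ⋖ v ∧ IncompRel (· ≤ ·) u v := by
  obtain ⟨u, v, w, hu, hv, huv⟩ := exists_covBy_covBy_incompRel (α := αᵒᵈ)
    (OrderDual.toDual_lt_toDual.2 hba) (OrderDual.toDual_lt_toDual.2 hbc) hac.symm
  exact ⟨u.ofDual, v.ofDual, w.ofDual, hu.ofDual, hv.ofDual, huv.symm⟩

end Covers

section LinearExtension

variable {α : Type*}

theorem exists_equiv_fin_lt_iff_of_injective {β : Type*} [LinearOrder β] [Fintype α]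
    (hn : Fintype.card α = n) (g : α → β) (hg : Function.Injective g) :
    ∃ e : α ≃ Fin n, ∀ x y, e x < e y ↔ g x < g y := by
  let _ : LinearOrder α := LinearOrder.lift' g hg
  let e := (Fintype.orderIsoFinOfCardEq α hn).symm
  exact ⟨e.toEquiv, fun _ _ ↦ e.lt_iff_lt⟩

theorem val_eq_val_add_one_of_fibers {f : α → ℕ} {e : α ≃ Fin n}
    (he : ∀ x y, f x < f y → e x < e y) {u v : α} (huv : f v = f u + 1)
    (hu : ∀ z, f z = f u → z = u) (hv : ∀ z, f z = f v → z = v) :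
    (e v : ℕ) = e u + 1 := by
  have hlt : e u < e v := he u v (by omega)
  by_contra hne
  set z := e.symm ⟨e u + 1, by omega⟩
  have hz : (e z : ℕ) = e u + 1 := by simp [z]
  have hfu : f u ≤ f z := not_lt.1 fun h ↦ absurd (he z u h) (by rw [Fin.lt_def]; omega)
  have hfv : f z ≤ f v := not_lt.1 fun h ↦ absurd (he v z h) (by rw [Fin.lt_def]; omega)
  rcases (show f z = f u ∨ f z = f v by omega) with h | h
  · rw [hu z h] at hz; omega
  · rw [hv z h] at hz; omega

variable [PartialOrder α] [Fintype α]

theorem exists_strictMono_equiv_fin_of_monotone (hn : Fintype.card α = n) (f : α → ℕ)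
    (hf : Monotone f) : ∃ e : α ≃ Fin n, StrictMono e ∧ ∀ x y, f x < f y → e x < e y := by
  let g : α → LinearExtension (ℕ ×ₗ α) := fun x ↦ toLinearExtension (toLex (f x, x))
  have hg : ∀ x y, x < y ∨ f x < f y → g x < g y := by
    refine fun x y hxy ↦ toLinearExtension.monotone.strictMono_of_injective (fun _ _ h ↦ h) ?_
    rw [Prod.Lex.toLex_lt_toLex]
    rcases hxy with hxy | hxy
    · exact (hf hxy.le).lt_or_eq.imp_right fun h ↦ ⟨h, hxy⟩
    · exact Or.inl hxy
  obtain ⟨e, he⟩ := exists_equiv_fin_lt_iff_of_injective hn g fun x y h ↦ congrArg (·.2) h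
  exact ⟨e, fun x y h ↦ (he x y).2 (hg x y (Or.inl h)),
    fun x y h ↦ (he x y).2 (hg x y (Or.inr h))⟩

theorem exists_strictMono_equiv_fin_consecutive (hn : Fintype.card α = n) {u v w : α}
    (hu : u ⋖ w) (hv : v ⋖ w) (huv : u ≠ v) :
    ∃ e : α ≃ Fin n, StrictMono e ∧ (e v : ℕ) = e u + 1 ∧ (e w : ℕ) = e v + 1 := by
  -- the elements below `w` other than `u, v` come first, then `u, v, w`, then the rest
  let f : α → ℕ := fun x ↦
    if x = u then 1 else if x = v then 2 else if x = w then 3 else if x < w then 0 else 4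
  have hf_le : ∀ x, f x ≤ 4 := fun x ↦ by simp only [f]; split_ifs <;> omega
  have hf_below : ∀ x y, x < y → y < w → f x = 0 := fun x y hxy hyw ↦ by
    have hxu : x ≠ u := by rintro rfl; exact hu.2 hxy hyw
    have hxv : x ≠ v := by rintro rfl; exact hv.2 hxy hyw
    simp [f, hxu, hxv, (hxy.trans hyw).ne, hxy.trans hyw]
  have hf : Monotone f := by
    intro x y hxy
    rcases hxy.eq_or_lt with rfl | hxy
    · rfl
    by_cases hyw : y < w
    · simp [hf_below x y hxy hyw]
    obtain rfl | hyw' := eq_or_ne y w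
    · have : f x ≤ 3 := by simp only [f, if_neg hxy.ne]; split_ifs <;> omega
      simpa [f, hu.ne', hv.ne'] using this
    · have hyu : y ≠ u := by rintro rfl; exact hyw hu.lt
      have hyv : y ≠ v := by rintro rfl; exact hyw hv.lt
      have : f y = 4 := by simp [f, hyw, hyw', hyu, hyv]
      exact this ▸ hf_le x
  obtain ⟨e, he, hfe⟩ := exists_strictMono_equiv_fin_of_monotone hn f hf
  have hfu : f u = 1 := by simp [f]
  have hfv : f v = 2 := by simp [f, huv.symm]
  have hfw : f w = 3 := by simp [f, hu.ne', hv.ne']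
  refine ⟨e, he, val_eq_val_add_one_of_fibers hfe (by omega) ?_ ?_,
    val_eq_val_add_one_of_fibers hfe (by omega) ?_ ?_⟩ <;>
  · intro z hz
    simp only [hfu, hfv, hfw, f] at hz
    split_ifs at hz <;> first | assumption | omega

theorem exists_strictMono_equiv_fin_consecutive' (hn : Fintype.card α = n) {u v w : α}
    (hu : w ⋖ u) (hv : w ⋖ v) (huv : u ≠ v) :
    ∃ e : α ≃ Fin n, StrictMono e ∧ (e u : ℕ) = e w + 1 ∧ (e v : ℕ) = e u + 1 := by
  obtain ⟨e, he, h₁, h₂⟩ := exists_strictMono_equiv_fin_consecutive (α := αᵒᵈ) hn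
    hv.toDual hu.toDual huv.symm
  refine ⟨(OrderDual.toDual.trans e).trans Fin.revPerm, fun x y hxy ↦ ?_, ?_, ?_⟩
  · exact Fin.rev_lt_rev.2 (he (OrderDual.toDual_lt_toDual.2 hxy))
  all_goals simp only [Equiv.trans_apply, Fin.revPerm_apply, Fin.val_rev]; omega

end LinearExtension

namespace FinPoset

/-- `Fin n` ordered by `P`: a type synonym, since `Fin n` already carries its standard order. -/
def Elem (_ : FinPoset n) : Type := Fin n

instance (P : FinPoset n) : PartialOrder P.Elem where
  le := P.le
  le_refl := P.le_refl
  le_trans := P.le_trans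
  le_antisymm := P.le_antisymm

instance (P : FinPoset n) : Fintype P.Elem := inferInstanceAs (Fintype (Fin n))

def toElem (P : FinPoset n) : Fin n ≃ P.Elem := Equiv.refl _

end FinPoset

theorem isUnionOfChains_iff_isTrans (P : FinPoset n) :
    IsUnionOfChains P ↔ IsTrans (Fin n) (SymmGen P.le) := by
  constructor
  · rintro ⟨f, hcomp, hfib⟩
    have hf : ∀ a b, SymmGen P.le a b → f a = f b := fun a b h ↦
      h.elim (hfib a b) fun h ↦ (hfib b a h).symm
    exact ⟨fun a b c hab hbc ↦ hcomp a c ((hf a b hab).trans (hf b c hbc))⟩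
  · intro htrans
    let s : Setoid (Fin n) :=
      ⟨SymmGen P.le, ⟨fun a ↦ .of_rel (P.le_refl a), .symm, htrans.trans _ _ _⟩⟩
    have hf : ∀ a b, (Quotient.mk s a).out = (Quotient.mk s b).out ↔ SymmGen P.le a b :=
      fun a b ↦ Quotient.out_inj.trans Quotient.eq
    exact ⟨fun a ↦ (Quotient.mk s a).out, fun a b h ↦ (hf a b).1 h,
      fun a b h ↦ (hf a b).2 (.of_rel h)⟩

theorem tauOp_eq_ite (P : FinPoset n) (π : Perm (Fin n)) {i : ℕ} {p q : Fin n} (hp : p.val = i)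
    (hq : q.val = i + 1) :
    tauOp P i π = if SymmGen P.le (π p) (π q) then π else π * swap p q := by
  obtain ⟨_, hp'⟩ := p
  obtain ⟨_, hq'⟩ := q
  subst hp hq
  rw [tauOp, dif_pos hq']
  simp only [SymmGen, ← not_or, ite_not]
  congr

def BraidAt (P : FinPoset n) (j : ℕ) (π : Perm (Fin n)) : Prop :=
  tauOp P j (tauOp P (j + 1) (tauOp P j π)) = tauOp P (j + 1) (tauOp P j (tauOp P (j + 1) π))

theorem braidAt_iff (P : FinPoset n) (π : Perm (Fin n)) {j : ℕ} (h : j + 2 < n) :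
    BraidAt P j π ↔
      (SymmGen P.le (π ⟨j, by omega⟩) (π ⟨j + 2, h⟩) →
        (SymmGen P.le (π ⟨j, by omega⟩) (π ⟨j + 1, by omega⟩) ↔
          SymmGen P.le (π ⟨j + 1, by omega⟩) (π ⟨j + 2, h⟩))) := by
  set p₀ : Fin n := ⟨j, by omega⟩
  set p₁ : Fin n := ⟨j + 1, by omega⟩
  set p₂ : Fin n := ⟨j + 2, h⟩
  have h₀₁ : p₀ ≠ p₁ := by simp [p₀, p₁, Fin.ext_iff]
  have h₀₂ : p₀ ≠ p₂ := by simp [p₀, p₂, Fin.ext_iff]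
  have h₁₂ : p₁ ≠ p₂ := by simp [p₁, p₂, Fin.ext_iff]
  have braid : swap p₀ p₁ * swap p₁ p₂ * swap p₀ p₁ = swap p₁ p₂ * swap p₀ p₁ * swap p₁ p₂ := by
    rw [swap_mul_swap_mul_swap h₀₁ h₀₂, swap_comm p₀ p₁, swap_comm p₁ p₂,
      swap_mul_swap_mul_swap h₁₂.symm h₀₂.symm, swap_comm]
  simp only [BraidAt, tauOp_eq_ite P _ (i := j) (p := p₀) (q := p₁) rfl rfl,
    tauOp_eq_ite P _ (i := j + 1) (p := p₁) (q := p₂) rfl rfl]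
  by_cases h01 : SymmGen P.le (π p₀) (π p₁) <;> by_cases h12 : SymmGen P.le (π p₁) (π p₂) <;>
    by_cases h02 : SymmGen P.le (π p₀) (π p₂) <;>
    simp [h01, h12, h02, symmGen_comm.not.1, Perm.mul_apply, swap_apply_of_ne_of_ne h₀₁ h₀₂,
      swap_apply_of_ne_of_ne h₀₂.symm h₁₂.symm, mul_assoc, h₀₁, h₁₂, braid]

theorem exists_not_braidAt_of_consecutive (P : FinPoset n) (e : P.Elem ≃ Fin n)
    (he : StrictMono e) {x y z : P.Elem} (hxy : (e y : ℕ) = e x + 1) (hyz : (e z : ℕ) = e y + 1)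
    (hxz : SymmGen P.le x z) (hne : ¬(SymmGen P.le x y ↔ SymmGen P.le y z)) :
    ∃ j, ∃ _ : j + 2 < n, ∃ π, IsLinearExtension P π ∧ ¬ BraidAt P j π := by
  have hj : (e x : ℕ) + 2 < n := by have := (e z).isLt; omega
  refine ⟨e x, hj, e.symm.trans P.toElem.symm, fun a b hab ↦ he (lt_of_le_of_ne hab.1 hab.2),
    ?_⟩
  have h₀ : e.symm ⟨e x, by omega⟩ = x := by simp
  have h₁ : e.symm ⟨e x + 1, by omega⟩ = y := e.symm_apply_eq.2 (Fin.ext hxy.symm)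
  have h₂ : e.symm ⟨e x + 2, hj⟩ = z := e.symm_apply_eq.2 (Fin.ext (by simp only; omega))
  rw [braidAt_iff P _ hj, trans_apply, trans_apply, trans_apply, h₀, h₁, h₂]
  exact fun h ↦ hne (h hxz)

theorem exists_not_braidAt_of_not_isTrans (P : FinPoset n)
    (hP : ¬ IsTrans (Fin n) (SymmGen P.le)) :
    ∃ j, ∃ _ : j + 2 < n, ∃ π, IsLinearExtension P π ∧ ¬ BraidAt P j π := by
  obtain ⟨a, b, c, hab, hbc, hac⟩ : ∃ a b c : P.Elem,
      SymmGen P.le a b ∧ SymmGen P.le b c ∧ IncompRel (· ≤ ·) a c := by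
    by_contra! h
    exact hP ⟨fun a b c hab hbc ↦ not_incompRel_iff_symmGen.1 (h a b c hab hbc)⟩
  rcases lt_lt_or_gt_gt_of_incompRel hac hab hbc with ⟨hab, hcb⟩ | ⟨hba, hbc⟩
  · obtain ⟨u, v, w, hu, hv, huv⟩ := exists_covBy_covBy_incompRel hab hcb hac
    obtain ⟨e, he, h₁, h₂⟩ := exists_strictMono_equiv_fin_consecutive (α := P.Elem)
      (Fintype.card_fin n) hu hv huv.ne
    exact exists_not_braidAt_of_consecutive P e he h₁ h₂ (.of_rel hu.le)
      fun h ↦ not_symmGen_iff.2 huv (h.2 (.of_rel hv.le))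
  · obtain ⟨u, v, w, hu, hv, huv⟩ := exists_covBy_covBy_incompRel' hba hbc hac
    obtain ⟨e, he, h₁, h₂⟩ := exists_strictMono_equiv_fin_consecutive' (α := P.Elem)
      (Fintype.card_fin n) hu hv huv.ne
    exact exists_not_braidAt_of_consecutive P e he h₁ h₂ (.of_rel hv.le)
      fun h ↦ not_symmGen_iff.2 huv (h.1 (.of_rel hu.le))

/-- The braid relations `π τ_j τ_{j+1} τ_j = π τ_{j+1} τ_j τ_{j+1}` hold for all
`1 ≤ j < n-1` (here `j` is 0-indexed, so the condition is `j + 2 < n`) and all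
linear extensions `π` of `P` if and only if `P` is a disjoint union of chains. -/
theorem braid_iff_union_of_chains (P : FinPoset n) :
    (∀ j : ℕ, j + 2 < n → ∀ π : Equiv.Perm (Fin n), IsLinearExtension P π →
        tauOp P j (tauOp P (j + 1) (tauOp P j π)) =
          tauOp P (j + 1) (tauOp P j (tauOp P (j + 1) π))) ↔
      IsUnionOfChains P := by
  rw [isUnionOfChains_iff_isTrans]
  refine ⟨fun hbraid ↦ by_contra fun hP ↦ ?_, fun hP j hj π _ ↦ ?_⟩
  · obtain ⟨j, hj, π, hπ, hfail⟩ := exists_not_braidAt_of_not_isTrans P hP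
    exact hfail (hbraid j hj π hπ)
  · exact (braidAt_iff P π hj).2 fun hxz ↦
      ⟨fun hxy ↦ hP.trans _ _ _ hxy.symm hxz, fun hyz ↦ hP.trans _ _ _ hxz hyz.symm⟩
end

section
/- For all 1 ≤ j ≤ n−1, the operator τ_j on linear extensions of a finite poset P of size n can be expressed as a product of extended promotion operators; specifically τ_j = ∂_j τ_{n-1} ⋯ τ_{j+2} τ_{j+1}, and by downward induction on j each τ_k appearing is itself a product of promotion operators. -/
open scoped Classical

variable {n : ℕ}

/-!
Each `τ_i` is an involution, so a word in the `τ`'s is undone by the reversed word. Hence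
`∂_j τ_{n-2} ⋯ τ_{j+1} = τ_j (τ_{j+1} ⋯ τ_{n-2}) (τ_{n-2} ⋯ τ_{j+1}) = τ_j`. Every `τ_k` on the
right has `k > j`, so by downward induction on `j` it is already a product of promotions, and
then so is `τ_j`.
-/

theorem reverse_range'_eq_map_range (j : ℕ) :
    (List.range' (j + 1) (n - 2 - j)).reverse = (List.range (n - 2 - j)).map (n - 2 - ·) := by
  rw [List.reverse_range']
  refine List.map_congr_left fun k hk => ?_
  rw [List.mem_range] at hk
  omega

namespace FinPoset

variable (P : FinPoset n)

noncomputable def tauSeq (w : List ℕ) (π : Equiv.Perm (Fin n)) : Equiv.Perm (Fin n) :=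
  w.foldl (fun σ k => tauOp P k σ) π

noncomputable def promoSeq (w : List ℕ) (π : Equiv.Perm (Fin n)) : Equiv.Perm (Fin n) :=
  w.foldl (fun σ k => promoOp P k σ) π

theorem tauOp_tauOp (i : ℕ) (π : Equiv.Perm (Fin n)) : tauOp P i (tauOp P i π) = π := by
  unfold tauOp
  split_ifs <;> simp_all [mul_assoc]

theorem tauSeq_reverse_tauSeq (w : List ℕ) (π : Equiv.Perm (Fin n)) :
    tauSeq P w.reverse (tauSeq P w π) = π := by
  induction w generalizing π with
  | nil => rfl
  | cons i w ih =>
    simp only [tauSeq, List.reverse_cons, List.foldl_append, List.foldl_cons, List.foldl_nil] at ih ⊢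
    rw [ih, tauOp_tauOp]

theorem promoOp_eq_tauSeq (j : ℕ) (π : Equiv.Perm (Fin n)) :
    promoOp P j π = tauSeq P (List.range' j (n - 1 - j)) π := by
  rw [promoOp, tauSeq, List.range'_eq_map_range, List.foldl_map]

theorem tauOp_eq_tauSeq_promoOp {j : ℕ} (hj : j + 2 ≤ n) (π : Equiv.Perm (Fin n)) :
    tauOp P j π = tauSeq P (List.range' (j + 1) (n - 2 - j)).reverse (promoOp P j π) := by
  have hlen : n - 1 - j = n - 2 - j + 1 := by omega
  rw [promoOp_eq_tauSeq, hlen, List.range'_succ]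
  exact (tauSeq_reverse_tauSeq P _ _).symm

theorem exists_promoSeq_eq_tauSeq (w : List ℕ) (hw : ∀ k ∈ w, ∃ l, tauOp P k = promoSeq P l) :
    ∃ l, tauSeq P w = promoSeq P l := by
  induction w with
  | nil => exact ⟨[], rfl⟩
  | cons i w ih =>
    obtain ⟨li, hli⟩ := hw i List.mem_cons_self
    obtain ⟨lw, hlw⟩ := ih fun k hk => hw k (List.mem_cons_of_mem i hk)
    refine ⟨li ++ lw, funext fun π => ?_⟩
    calc tauSeq P (i :: w) π = tauSeq P w (tauOp P i π) := rfl
      _ = promoSeq P lw (promoSeq P li π) := by rw [hlw, hli]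
      _ = promoSeq P (li ++ lw) π := List.foldl_append.symm

theorem exists_promoSeq_eq_tauOp (j : ℕ) (hj : j + 2 ≤ n) : ∃ l, tauOp P j = promoSeq P l := by
  have hlater : ∀ k ∈ (List.range' (j + 1) (n - 2 - j)).reverse, ∃ l, tauOp P k = promoSeq P l := by
    intro k hk
    obtain ⟨hjk, hkn⟩ := List.mem_range'_1.mp (List.mem_reverse.mp hk)
    exact exists_promoSeq_eq_tauOp k (by omega)
  obtain ⟨l, hl⟩ := exists_promoSeq_eq_tauSeq P _ hlater
  refine ⟨j :: l, funext fun π => ?_⟩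
  rw [tauOp_eq_tauSeq_promoOp P hj, hl]
  rfl
termination_by n - j

end FinPoset

/-- For `1 ≤ j ≤ n-1` (0-indexed: `j + 2 ≤ n`), `τ_j` can be expressed via promotion
operators: `τ_j = ∂_j τ_{n-1} ⋯ τ_{j+2} τ_{j+1}` (0-indexed: `∂_j τ_{n-2} ⋯ τ_{j+1}`),
and, by downward induction, `τ_j` is a product of promotion operators. -/
theorem tau_as_product_of_promotions (P : FinPoset n) (j : ℕ) (hj : j + 2 ≤ n) :
    (∀ π : Equiv.Perm (Fin n), IsLinearExtension P π →
      tauOp P j π =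
        (List.range (n - 2 - j)).foldl (fun σ k => tauOp P (n - 2 - k) σ) (promoOp P j π)) ∧
    (∃ l : List ℕ, ∀ π : Equiv.Perm (Fin n), IsLinearExtension P π →
      tauOp P j π = l.foldl (fun σ k => promoOp P k σ) π) := by
  refine ⟨fun π _ => ?_, ?_⟩
  · rw [P.tauOp_eq_tauSeq_promoOp hj, reverse_range'_eq_map_range,
      FinPoset.tauSeq, List.foldl_map]
  · obtain ⟨l, hl⟩ := P.exists_promoSeq_eq_tauOp j hj
    exact ⟨l, fun π _ => congrFun hl π⟩
end

section
/- The directed graph on the set of linear extensions L(P) of a finite poset P, with an edge from π to π' whenever π' = π ∂_j for some j ∈ [n], is strongly connected. -/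
open scoped Classical

variable {n : ℕ}

/-!
Every `τ_i` that moves a linear extension is undone by `τ_i` itself, and `∂_j = τ_j ∂_{j+1}`.
Since `∂_{j+1}` is injective on a finite set, some power of it is the identity, so following
`∂_{j+1}` long enough leads from `π ∂_j = (π τ_j) ∂_{j+1}` back to `π τ_j`: every move `π ↦ π τ_j`
is realised by a directed path. Finally any linear extension is bubble-sorted into any other by
such moves: at a descent of `π'⁻¹ σ` the two adjacent entries of `σ` are ordered oppositely by the
linear extensions `σ` and `π'`, hence incomparable, and swapping them strictly increases the
potential `∑ k, k · π'⁻¹ (σ k)`, which can only increase finitely often.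
-/

open Equiv Relation

theorem Relation.reflTransGen_of_exists_potential_lt {α β : Type*} [Finite α] [Preorder β]
    {r : α → α → Prop} (p : α → Prop) (Φ : α → β) {b : α}
    (step : ∀ a, p a → a ≠ b → ∃ c, p c ∧ ReflTransGen r a c ∧ Φ a < Φ c) :
    ∀ a, p a → ReflTransGen r a b := by
  have wf : WellFounded (fun c a => Φ a < Φ c) :=
    @Finite.wellFounded_of_trans_of_irrefl _ _ _ ⟨fun _ _ _ h₁ h₂ => h₂.trans h₁⟩
      ⟨fun _ => lt_irrefl _⟩
  intro a
  induction a using wf.induction with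
  | _ a ih =>
    intro ha
    by_cases hab : a = b
    · exact hab ▸ ReflTransGen.refl
    obtain ⟨c, hc, hac, hlt⟩ := step a ha hab
    exact hac.trans (ih c hlt hc)

theorem Equiv.Perm.exists_descent_of_ne_one {f : Perm (Fin n)} (hf : f ≠ 1) :
    ∃ i, ∃ h : i + 1 < n, f ⟨i + 1, h⟩ < f ⟨i, by omega⟩ := by
  by_contra! hasc
  apply hf
  obtain _ | m := n
  · exact Subsingleton.elim _ _
  have hmono : StrictMono f := Fin.strictMono_iff_lt_succ.2 fun i =>
    (hasc i (by omega)).lt_of_ne (f.injective.ne (by simp [Fin.ext_iff]))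
  ext k
  exact congrArg (fun e : Fin (m + 1) ≃o Fin (m + 1) => (e k : ℕ))
    (Subsingleton.elim (hmono.orderIsoOfSurjective f f.surjective) (OrderIso.refl _))

theorem Fin.sum_mul_comp_swap_of_adjacent {R : Type*} [CommRing R] (g : Fin n → R) {x y : Fin n}
    (hxy : (y : ℕ) = x + 1) :
    ∑ k : Fin n, (k : R) * g (swap x y k) = ∑ k : Fin n, (k : R) * g k + (g x - g y) := by
  have hne : x ≠ y := fun h => by simp [h] at hxy
  rw [← Equiv.sum_comp (swap x y)]
  simp only [swap_apply_self]
  rw [← sub_eq_iff_eq_add', ← Finset.sum_sub_distrib,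
    Fintype.sum_eq_add x y hne fun k hk => by simp [swap_apply_of_ne_of_ne hk.1 hk.2]]
  simp only [swap_apply_left, swap_apply_right]
  push_cast [hxy]
  ring

theorem Fin.swap_lt_swap_of_adjacent {x y u v : Fin n} (hxy : (y : ℕ) = x + 1) (huv : u < v)
    (hne : ¬(u = x ∧ v = y)) : swap x y u < swap x y v := by
  simp only [swap_apply_def]
  split_ifs <;> fin_omega

section Tau

variable (P : FinPoset n) {i : ℕ} {π : Perm (Fin n)}

theorem tauOp_of_incomparable (h : i + 1 < n)
    (hinc : ¬ P.le (π ⟨i, by omega⟩) (π ⟨i + 1, h⟩) ∧ ¬ P.le (π ⟨i + 1, h⟩) (π ⟨i, by omega⟩)) :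
    tauOp P i π = π * swap ⟨i, by omega⟩ ⟨i + 1, h⟩ := by
  rw [tauOp, dif_pos h, if_pos hinc]

theorem tauOp_involutive (i : ℕ) : Function.Involutive (tauOp P i) := by
  intro π
  unfold tauOp
  split_ifs with h hinc hinc' <;> try rfl
  · rw [mul_assoc, swap_mul_self, mul_one]
  · simp only [Perm.mul_apply, swap_apply_left, swap_apply_right] at hinc'
    exact absurd hinc.symm hinc'

variable {P}

theorem IsLinearExtension.tauOp (hπ : IsLinearExtension P π) (i : ℕ) :
    IsLinearExtension P (tauOp P i π) := by
  unfold _root_.tauOp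
  split_ifs with h hinc
  · intro a b hab
    simp only [Perm.mul_def, symm_trans_apply, symm_swap]
    refine Fin.swap_lt_swap_of_adjacent rfl (hπ a b hab) ?_
    rintro ⟨ha, hb⟩
    apply hinc.1
    rw [← ha, ← hb, apply_symm_apply, apply_symm_apply]
    exact hab.1
  all_goals exact hπ

end Tau

section Promo

variable {P : FinPoset n}

theorem IsLinearExtension.promoOp {π : Perm (Fin n)} (hπ : IsLinearExtension P π) (j : ℕ) :
    IsLinearExtension P (promoOp P j π) := by
  unfold _root_.promoOp
  induction List.range (n - 1 - j) generalizing π with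
  | nil => exact hπ
  | cons k l ih => exact ih (hπ.tauOp _)

variable (P) (j : ℕ)

theorem promoOp_injective : Function.Injective (promoOp P j) := by
  unfold promoOp
  induction List.range (n - 1 - j) with
  | nil => exact fun _ _ h => h
  | cons k l ih => exact ih.comp (tauOp_involutive P _).injective

theorem promoOp_eq_promoOp_succ_tauOp (hj : j + 1 < n) (π : Perm (Fin n)) :
    promoOp P j π = promoOp P (j + 1) (tauOp P j π) := by
  obtain ⟨m, hm⟩ : ∃ m, n - 1 - j = m + 1 := ⟨n - 2 - j, by omega⟩
  rw [promoOp, promoOp, hm, show n - 1 - (j + 1) = m by omega, List.range_succ_eq_map,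
    List.foldl_cons, List.foldl_map]
  simp only [Nat.add_zero, Nat.succ_eq_add_one, ← Nat.add_assoc, Nat.add_right_comm j 1]

end Promo

section Graph

variable (P : FinPoset n)

def PromotionEdge (σ σ' : Perm (Fin n)) : Prop :=
  IsLinearExtension P σ ∧ ∃ j, j < n ∧ σ' = promoOp P j σ

variable {P} {σ : Perm (Fin n)} {j : ℕ}

theorem reflTransGen_promotionEdge_iterate_promoOp (hj : j < n) (hσ : IsLinearExtension P σ)
    (k : ℕ) : ReflTransGen (PromotionEdge P) σ ((promoOp P j)^[k] σ) := by
  induction k with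
  | zero => exact ReflTransGen.refl
  | succ k ih =>
    have hk : IsLinearExtension P ((promoOp P j)^[k] σ) :=
      Function.Iterate.rec (IsLinearExtension P) hσ (fun _ h => h.promoOp j) k
    rw [Function.iterate_succ_apply']
    exact ih.tail ⟨hk, j, hj, rfl⟩

theorem reflTransGen_promotionEdge_promoOp_self (hj : j < n) (hσ : IsLinearExtension P σ) :
    ReflTransGen (PromotionEdge P) (promoOp P j σ) σ := by
  obtain ⟨k, hk, hper⟩ := Function.mem_periodicPts.1 ((promoOp_injective P j).mem_periodicPts σ)
  obtain ⟨m, rfl⟩ : ∃ m, k = m + 1 := ⟨k - 1, by omega⟩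
  have h := reflTransGen_promotionEdge_iterate_promoOp hj (hσ.promoOp j) m
  rwa [← Function.iterate_succ_apply, hper.eq] at h

theorem reflTransGen_promotionEdge_tauOp (hj : j + 1 < n) (hσ : IsLinearExtension P σ) :
    ReflTransGen (PromotionEdge P) σ (tauOp P j σ) := by
  have hforward : ReflTransGen (PromotionEdge P) σ (promoOp P (j + 1) (tauOp P j σ)) :=
    .single ⟨hσ, j, by omega, (promoOp_eq_promoOp_succ_tauOp P j hj σ).symm⟩
  exact hforward.trans (reflTransGen_promotionEdge_promoOp_self hj (hσ.tauOp j))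

end Graph

section Sorting

variable {P : FinPoset n}

theorem IsLinearExtension.incomparable_of_lt_of_lt {σ τ : Perm (Fin n)}
    (hσ : IsLinearExtension P σ) (hτ : IsLinearExtension P τ) {a b : Fin n}
    (hσab : σ.symm a < σ.symm b) (hτba : τ.symm b < τ.symm a) : ¬ P.le a b ∧ ¬ P.le b a := by
  have hab : a ≠ b := by rintro rfl; exact hσab.false
  exact ⟨fun h => (hτ a b ⟨h, hab⟩).asymm hτba, fun h => (hσ b a ⟨h, hab.symm⟩).asymm hσab⟩

def positionPotential (π' σ : Perm (Fin n)) : ℤ :=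
  ∑ k : Fin n, (k : ℤ) * (π'.symm (σ k) : ℤ)

theorem exists_positionPotential_lt_tauOp {σ π' : Perm (Fin n)} (hσ : IsLinearExtension P σ)
    (hπ' : IsLinearExtension P π') (hne : σ ≠ π') :
    ∃ i, i + 1 < n ∧ positionPotential π' σ < positionPotential π' (tauOp P i σ) := by
  obtain ⟨i, hi, hdesc⟩ := Perm.exists_descent_of_ne_one (f := π'.symm * σ)
    (by rwa [Ne, ← Perm.inv_def, inv_mul_eq_one, eq_comm])
  have hinc := hσ.incomparable_of_lt_of_lt hπ' (by simp [Fin.lt_def]) hdesc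
  refine ⟨i, hi, ?_⟩
  rw [tauOp_of_incomparable P hi hinc, positionPotential, positionPotential]
  simp only [Perm.mul_apply]
  rw [Fin.sum_mul_comp_swap_of_adjacent (fun k => (π'.symm (σ k) : ℤ)) rfl]
  simp only [Perm.mul_apply] at hdesc
  have : ((π'.symm (σ ⟨i + 1, hi⟩) : ℕ) : ℤ) < π'.symm (σ ⟨i, by omega⟩) := by
    exact_mod_cast hdesc
  omega

end Sorting

/-- The directed graph on the linear extensions of `P`, with an edge from `π` to
`π'` whenever `π' = π ∂_j` for some `j ∈ [n]`, is strongly connected: any linear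
extension can be reached from any other by a directed path. -/
theorem promotion_graph_strongly_connected (P : FinPoset n)
    (π π' : Equiv.Perm (Fin n)) (hπ : IsLinearExtension P π)
    (hπ' : IsLinearExtension P π') :
    Relation.ReflTransGen
      (fun σ σ' => IsLinearExtension P σ ∧ ∃ j, j < n ∧ σ' = promoOp P j σ) π π' := by
  refine reflTransGen_of_exists_potential_lt (r := PromotionEdge P) (IsLinearExtension P)
    (positionPotential π') (fun σ hσ hne => ?_) π hπ
  obtain ⟨i, hi, hlt⟩ := exists_positionPotential_lt_tauOp hσ hπ' hne
  exact ⟨_, hσ.tauOp i, reflTransGen_promotionEdge_tauOp hi hσ, hlt⟩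
end

section
/- For the promotion Markov chain on L(P), the vector w defined by w(π) = ∏_{i=1}^n (x_1 + ⋯ + x_i)/(x_{π_1} + ⋯ + x_{π_i}) satisfies the stationarity (master) equation: w(π) (x_{π_1} + ⋯ + x_{π_n}) = Σ_{j=1}^n x_{π'_j} w(π'), where for each j, π' = π τ_{n-1} ⋯ τ_j (so that π = π' ∂_j). -/
open scoped Classical

variable {n : ℕ}

/-- `π' = π τ_{n-1} ⋯ τ_j` (0-indexed: `π τ_{n-2} ⋯ τ_j`); it satisfies `π' ∂_j = π`. -/
noncomputable def piPrime (P : FinPoset n) (π : Equiv.Perm (Fin n)) (j : ℕ) :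
    Equiv.Perm (Fin n) :=
  (List.range (n - 1 - j)).foldl (fun σ k => tauOp P (n - 2 - k) σ) π

/-- The stationary weight of the promotion Markov chain,
`w(π) = ∏_i (x_1 + ⋯ + x_i) / (x_{π_1} + ⋯ + x_{π_i})`. -/
noncomputable def wProm (x : Fin n → ℝ) (π : Equiv.Perm (Fin n)) : ℝ :=
  ∏ i : Fin n, (∑ k ∈ Finset.Iic i, x k) / (∑ k ∈ Finset.Iic i, x (π k))
lemma piPrime_ge (P : FinPoset n) (π : Equiv.Perm (Fin n)) {j : ℕ} (hj : n - 1 ≤ j) :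
    piPrime P π j = π := by
  unfold piPrime
  rw [Nat.sub_eq_zero_of_le hj]
  simp

lemma piPrime_rec (P : FinPoset n) (π : Equiv.Perm (Fin n)) {j : ℕ} (hj : j < n - 1) :
    piPrime P π j = tauOp P j (piPrime P π (j + 1)) := by
  unfold piPrime
  have h1 : n - 1 - j = (n - 1 - (j + 1)) + 1 := by omega
  have h2 : n - 2 - (n - 1 - (j + 1)) = j := by omega
  rw [h1, List.range_succ, List.foldl_append]
  simp [h2]

lemma tauOp_cases (P : FinPoset n) (i : ℕ) (σ : Equiv.Perm (Fin n)) (h : i + 1 < n) :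
    tauOp P i σ = σ ∨
      tauOp P i σ = σ * Equiv.swap (⟨i, Nat.lt_of_succ_lt h⟩ : Fin n) ⟨i + 1, h⟩ := by
  unfold tauOp
  rw [dif_pos h]
  split_ifs with h2
  · exact Or.inr rfl
  · exact Or.inl rfl

lemma tauOp_apply_ne (P : FinPoset n) (i : ℕ) (σ : Equiv.Perm (Fin n))
    (k : Fin n) (hk1 : (k : ℕ) ≠ i) (hk2 : (k : ℕ) ≠ i + 1) :
    tauOp P i σ k = σ k := by
  by_cases h : i + 1 < n
  · rcases tauOp_cases P i σ h with h' | h' <;> rw [h']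
    rw [Equiv.Perm.mul_apply,
      Equiv.swap_apply_of_ne_of_ne (Fin.ne_of_val_ne hk1) (Fin.ne_of_val_ne hk2)]
  · unfold tauOp
    rw [dif_neg h]

lemma tauOp_sum (P : FinPoset n) (i : ℕ) (σ : Equiv.Perm (Fin n)) (x : Fin n → ℝ)
    (m : Fin n) (hm : i < (m : ℕ)) :
    ∑ k ∈ Finset.Iic m, x (tauOp P i σ k) = ∑ k ∈ Finset.Iic m, x (σ k) := by
  by_cases h : i + 1 < n
  · rcases tauOp_cases P i σ h with h' | h' <;> rw [h']
    set a : Fin n := ⟨i, Nat.lt_of_succ_lt h⟩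
    set b : Fin n := ⟨i + 1, h⟩
    have ham : a ≤ m := by simp [a, Fin.le_def]; omega
    have hbm : b ≤ m := by simp [b, Fin.le_def]; omega
    have hstep : ∀ k : Fin n, k ≤ m → Equiv.swap a b k ≤ m := by
      intro k hk
      rcases eq_or_ne k a with rfl | h1
      · rw [Equiv.swap_apply_left]; exact hbm
      rcases eq_or_ne k b with rfl | h2
      · rw [Equiv.swap_apply_right]; exact ham
      · rw [Equiv.swap_apply_of_ne_of_ne h1 h2]; exact hk
    refine Finset.sum_equiv (Equiv.swap a b) ?_ ?_
    · intro k
      simp only [Finset.mem_Iic]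
      constructor
      · exact hstep k
      · intro hk
        have := hstep _ hk
        rwa [Equiv.swap_apply_self] at this
    · intro k _
      simp [Equiv.Perm.mul_apply]
  · unfold tauOp
    rw [dif_neg h]

lemma piPrime_apply_lt (P : FinPoset n) (π : Equiv.Perm (Fin n)) :
    ∀ d j, n - 1 - j ≤ d → ∀ k : Fin n, (k : ℕ) < j → piPrime P π j k = π k := by
  intro d
  induction d with
  | zero =>
    intro j hj k hk
    rw [piPrime_ge P π (by omega)]
  | succ d ih =>
    intro j hj k hk
    by_cases hjn : j < n - 1
    · rw [piPrime_rec P π hjn, tauOp_apply_ne _ _ _ _ (by omega) (by omega)]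
      exact ih (j + 1) (by omega) k (by omega)
    · rw [piPrime_ge P π (by omega)]

lemma piPrime_sum (P : FinPoset n) (π : Equiv.Perm (Fin n)) (x : Fin n → ℝ) :
    ∀ d j (m : Fin n), (m : ℕ) - j ≤ d → j ≤ (m : ℕ) →
      ∑ k ∈ Finset.Iic m, x (piPrime P π j k)
        = ∑ k ∈ Finset.Iic m, x (piPrime P π (m : ℕ) k) := by
  intro d
  induction d with
  | zero =>
    intro j m h1 h2
    have : j = (m : ℕ) := by omega
    rw [this]
  | succ d ih =>
    intro j m h1 h2
    rcases eq_or_lt_of_le h2 with he | hlt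
    · rw [he]
    · have hjn : j < n - 1 := by have := m.isLt; omega
      rw [piPrime_rec P π hjn, tauOp_sum P j _ x m hlt]
      exact ih (j + 1) m (by omega) (by omega)

/-- The weight `w(π) = ∏_i (x_1 + ⋯ + x_i)/(x_{π_1} + ⋯ + x_{π_i})` satisfies the
master (stationarity) equation of the promotion Markov chain:
`w(π) (x_{π_1} + ⋯ + x_{π_n}) = Σ_j x_{π'_j} w(π')` where, for each `j`,
`π' = π τ_{n-1} ⋯ τ_j` (so that `π = π' ∂_j`). -/
theorem promotion_master_equation (P : FinPoset n) (x : Fin n → ℝ)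
    (hx : ∀ i, 0 < x i) (π : Equiv.Perm (Fin n)) (hπ : IsLinearExtension P π) :
    wProm x π * (∑ i : Fin n, x (π i)) =
      ∑ j : Fin n, x (piPrime P π (j : ℕ) j) * wProm x (piPrime P π (j : ℕ)) := by
  classical
  set D : Fin n → ℝ := fun m => ∑ k ∈ Finset.Iic m, x (π k) with hDdef
  set Pp : ℕ → ℝ := fun j =>
    ∑ k ∈ Finset.univ.filter (fun k : Fin n => (k : ℕ) < j), x (π k) with hPpdef
  set c : Fin n → Fin n := fun m => piPrime P π (m : ℕ) m with hcdef
  set E : Fin n → ℝ := fun m => Pp (m : ℕ) + x (c m) with hEdef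
  set A : ℕ → ℝ := fun j =>
    ∏ m ∈ Finset.univ.filter (fun m : Fin n => j ≤ (m : ℕ)), (D m / E m) with hAdef
  set G : ℕ → ℝ := fun j => wProm x π * (Pp j * A j) with hGdef
  have hD : ∀ m, 0 < D m := by
    intro m
    exact Finset.sum_pos (fun k _ => hx _) ⟨m, Finset.mem_Iic.2 le_rfl⟩
  have hE : ∀ m, 0 < E m := by
    intro m
    exact add_pos_of_nonneg_of_pos (Finset.sum_nonneg fun k _ => (hx _).le) (hx _)
  -- prefix sums of piPrime
  have hsum_gt : ∀ (m : Fin n) (j : ℕ), (m : ℕ) < j →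
      ∑ k ∈ Finset.Iic m, x (piPrime P π j k) = D m := by
    intro m j hmj
    refine Finset.sum_congr rfl fun k hk => ?_
    rw [piPrime_apply_lt P π (n - 1 - j) j le_rfl k
      (by have := Finset.mem_Iic.1 hk; have : (k : ℕ) ≤ (m : ℕ) := this; omega)]
  have hsum_le : ∀ (m : Fin n) (j : ℕ), j ≤ (m : ℕ) →
      ∑ k ∈ Finset.Iic m, x (piPrime P π j k) = E m := by
    intro m j hjm
    rw [piPrime_sum P π x ((m : ℕ) - j) j m le_rfl hjm]
    have hins : Finset.Iic m = insert m (Finset.Iio m) := (Finset.Iio_insert m).symm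
    rw [hins, Finset.sum_insert (by simp)]
    have h1 : ∑ k ∈ Finset.Iio m, x (piPrime P π (m : ℕ) k)
        = ∑ k ∈ Finset.Iio m, x (π k) := by
      refine Finset.sum_congr rfl fun k hk => ?_
      rw [piPrime_apply_lt P π (n - 1 - (m : ℕ)) (m : ℕ) le_rfl k
        (Fin.lt_def.mp (Finset.mem_Iio.1 hk))]
    have h2 : ∑ k ∈ Finset.Iio m, x (π k) = Pp (m : ℕ) := by
      refine Finset.sum_congr ?_ fun k _ => rfl
      ext k
      simp only [Finset.mem_Iio, Finset.mem_filter, Finset.mem_univ, true_and, Fin.lt_def]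
    rw [h1, h2, hEdef]
    ring
  -- weight factorization
  have hw : ∀ j : ℕ, wProm x (piPrime P π j) = wProm x π * A j := by
    intro j
    have : wProm x (piPrime P π j)
        = ∏ m : Fin n, ((∑ k ∈ Finset.Iic m, x k) / D m
            * (if j ≤ (m : ℕ) then D m / E m else 1)) := by
      rw [wProm]
      refine Finset.prod_congr rfl fun m _ => ?_
      by_cases hjm : j ≤ (m : ℕ)
      · rw [hsum_le m j hjm, if_pos hjm, div_mul_div_comm,
          mul_comm (D m) (E m), ← div_mul_div_comm, div_self (hD m).ne', mul_one]
      · rw [hsum_gt m j (by omega), if_neg hjm, mul_one]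
    rw [this, Finset.prod_mul_distrib, ← Finset.prod_filter, wProm, hAdef]
  have hA : ∀ (j : ℕ) (hj : j < n), A j = D ⟨j, hj⟩ / E ⟨j, hj⟩ * A (j + 1) := by
    intro j hj
    have hset : Finset.univ.filter (fun m : Fin n => j ≤ (m : ℕ))
        = insert ⟨j, hj⟩ (Finset.univ.filter (fun m : Fin n => j + 1 ≤ (m : ℕ))) := by
      ext m
      simp only [Finset.mem_filter, Finset.mem_univ, true_and, Finset.mem_insert,
        Fin.ext_iff]
      omega
    simp only [hAdef]
    rw [hset, Finset.prod_insert (by simp)]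
  have hPpsucc : ∀ (j : ℕ) (hj : j < n), Pp (j + 1) = D ⟨j, hj⟩ := by
    intro j hj
    refine Finset.sum_congr ?_ fun k _ => rfl
    ext k
    simp only [Finset.mem_filter, Finset.mem_univ, true_and, Finset.mem_Iic, Fin.le_def]
    omega
  -- per-index telescoping identity
  have hterm : ∀ j : Fin n,
      x (piPrime P π (j : ℕ) j) * wProm x (piPrime P π (j : ℕ))
        = G ((j : ℕ) + 1) - G (j : ℕ) := by
    intro j
    have hj : (j : ℕ) < n := j.isLt
    have hcx : x (piPrime P π (j : ℕ) j) = E j - Pp (j : ℕ) := by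
      have : E j = Pp (j : ℕ) + x (c j) := rfl
      rw [this, hcdef]
      ring
    have hjmk : (⟨(j : ℕ), hj⟩ : Fin n) = j := by ext; rfl
    rw [hcx, hw (j : ℕ)]
    simp only [hGdef]
    rw [hA (j : ℕ) hj, hPpsucc (j : ℕ) hj, hjmk]
    have hEne : E j ≠ 0 := (hE j).ne'
    field_simp
  rw [Finset.sum_congr rfl fun j _ => hterm j]
  have htel : ∑ j : Fin n, (G ((j : ℕ) + 1) - G (j : ℕ))
      = ∑ j ∈ Finset.range n, (G (j + 1) - G j) :=
    Fin.sum_univ_eq_sum_range (fun j => G (j + 1) - G j) n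
  rw [htel, Finset.sum_range_sub G]
  have hG0 : G 0 = 0 := by
    have : Pp 0 = 0 := by
      rw [hPpdef]
      simp
    rw [hGdef]
    simp [this]
  have hAn : A n = 1 := by
    simp only [hAdef]
    have : Finset.univ.filter (fun m : Fin n => n ≤ (m : ℕ)) = ∅ := by
      ext m
      simp only [Finset.mem_filter, Finset.mem_univ, true_and, Finset.notMem_empty,
        iff_false, not_le]
      exact m.isLt
    rw [this, Finset.prod_empty]
  have hPn : Pp n = ∑ i : Fin n, x (π i) := by
    rw [hPpdef]
    refine Finset.sum_congr ?_ fun k _ => rfl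
    ext k
    simp [k.isLt]
  rw [hG0]
  simp only [hGdef]
  rw [hAn, hPn]
  ring
end

section
/- The stationary state weight w(π) = ∏_{i=1}^n x_{π_i}^{i − π_i} of the transposition Markov chain satisfies the master equation w(π) Σ_{i=1}^n x_{π_i} = Σ_{j=1}^n x_{π^{(j)}_j} w(π^{(j)}), where π^{(j)} = π τ_j. -/
open scoped Classical

variable {n : ℕ}

/-- The stationary weight of the transposition Markov chain,
`w(π) = ∏_i x_{π_i}^{i - π_i}` (the exponent is an integer). -/
noncomputable def wTrans (x : Fin n → ℝ) (π : Equiv.Perm (Fin n)) : ℝ :=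
  ∏ i : Fin n, x (π i) ^ (((i : ℕ) : ℤ) - (((π i : ℕ)) : ℤ))

lemma key_swap (x : Fin n → ℝ) (hx : ∀ i, x i ≠ 0) (π : Equiv.Perm (Fin n))
    (a b : Fin n) (hab : (b : ℕ) = (a : ℕ) + 1) :
    x ((π * Equiv.swap a b) a) * wTrans x (π * Equiv.swap a b)
      = x (π a) * wTrans x π := by
  have hne : a ≠ b := by
    intro h; rw [h] at hab; omega
  have hsa : (π * Equiv.swap a b) a = π b := by simp
  have h1 : wTrans x (π * Equiv.swap a b)
      = ∏ k : Fin n, x (π k) ^ (((Equiv.swap a b k : ℕ) : ℤ) - ((π k : ℕ) : ℤ)) := by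
    rw [wTrans, ← Equiv.prod_comp (Equiv.swap a b)
      (fun i => x ((π * Equiv.swap a b) i) ^ (((i : ℕ) : ℤ) - (((π * Equiv.swap a b) i : ℕ) : ℤ)))]
    refine Finset.prod_congr rfl fun k _ => ?_
    simp [Equiv.Perm.mul_apply, Equiv.swap_apply_self]
  have h2 : ∀ k : Fin n, x (π k) ^ (((Equiv.swap a b k : ℕ) : ℤ) - ((π k : ℕ) : ℤ))
      = x (π k) ^ (((k : ℕ) : ℤ) - ((π k : ℕ) : ℤ))
        * x (π k) ^ (((Equiv.swap a b k : ℕ) : ℤ) - ((k : ℕ) : ℤ)) := by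
    intro k
    rw [← zpow_add₀ (hx _)]
    ring_nf
  have h3 : ∏ k : Fin n, x (π k) ^ (((Equiv.swap a b k : ℕ) : ℤ) - ((k : ℕ) : ℤ))
      = x (π a) * (x (π b))⁻¹ := by
    rw [← Finset.prod_subset (Finset.subset_univ ({a, b} : Finset (Fin n)))
      (fun k _ hk => ?_)]
    · rw [Finset.prod_pair hne, Equiv.swap_apply_left, Equiv.swap_apply_right]
      have e1 : ((b : ℕ) : ℤ) - ((a : ℕ) : ℤ) = 1 := by omega
      have e2 : ((a : ℕ) : ℤ) - ((b : ℕ) : ℤ) = -1 := by omega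
      rw [e1, e2, zpow_one, zpow_neg_one]
    · have hka : k ≠ a := fun h => hk (by simp [h])
      have hkb : k ≠ b := fun h => hk (by simp [h])
      rw [Equiv.swap_apply_of_ne_of_ne hka hkb]
      simp
  rw [hsa, h1]
  rw [Finset.prod_congr rfl fun k _ => h2 k, Finset.prod_mul_distrib, h3]
  rw [show (∏ k : Fin n, x (π k) ^ (((k : ℕ) : ℤ) - ((π k : ℕ) : ℤ))) = wTrans x π from rfl]
  rw [show x (π b) * (wTrans x π * (x (π a) * (x (π b))⁻¹))
      = (x (π b) * (x (π b))⁻¹) * (wTrans x π * x (π a)) by ring,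
    mul_inv_cancel₀ (hx (π b)), one_mul, mul_comm]

/-- The weight `w(π) = ∏_i x_{π_i}^{i-π_i}` satisfies the master (stationarity)
equation of the transposition Markov chain:
`w(π) Σ_i x_{π_i} = Σ_j x_{π^{(j)}_j} w(π^{(j)})` where `π^{(j)} = π τ_j`. -/
theorem transposition_master_equation (P : FinPoset n) (x : Fin n → ℝ)
    (hx : ∀ i, 0 < x i) (π : Equiv.Perm (Fin n)) (hπ : IsLinearExtension P π) :
    wTrans x π * (∑ i : Fin n, x (π i)) =
      ∑ j : Fin n, x (tauOp P (j : ℕ) π j) * wTrans x (tauOp P (j : ℕ) π) := by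

  have hterm : ∀ j : Fin n,
      x (tauOp P (j : ℕ) π j) * wTrans x (tauOp P (j : ℕ) π) = x (π j) * wTrans x π := by
    intro j
    rw [tauOp]
    by_cases h : (j : ℕ) + 1 < n
    · rw [dif_pos h]
      by_cases hc : ¬ P.le (π ⟨(j : ℕ), Nat.lt_of_succ_lt h⟩) (π ⟨(j : ℕ) + 1, h⟩) ∧
          ¬ P.le (π ⟨(j : ℕ) + 1, h⟩) (π ⟨(j : ℕ), Nat.lt_of_succ_lt h⟩)
      · rw [if_pos hc]
        exact key_swap x (fun i => (hx i).ne') π ⟨(j : ℕ), Nat.lt_of_succ_lt h⟩ ⟨(j : ℕ) + 1, h⟩ rfl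
      · rw [if_neg hc]
    · rw [dif_neg h]
  rw [Finset.sum_congr rfl fun j _ => hterm j, ← Finset.sum_mul, mul_comm]
end

section
/- Let P be a rooted forest of size n. Then Σ_{π ∈ L(P)} Z_P w(π) = 1, where w(π) = ∏_{i=1}^n (x_1 + ⋯ + x_i)/(x_{π_1} + ⋯ + x_{π_i}) and Z_P = ∏_{i=1}^n x_{≼i} / (x_1 + ⋯ + x_i), with x_{≼i} = Σ_{j ≼ i} x_j. -/
open scoped Classical

variable {n : ℕ}

/-- `P` is a rooted forest: every element has at most one successor (cover above). -/
def IsRootedForest (P : FinPoset n) : Prop :=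
  ∀ x y z : Fin n, IsCover P x y → IsCover P x z → y = z

/-!
Multiplying out, `Z_P w(π) = ∏ᵢ x_{≼i} · ∏ᵢ (x_{π_1} + ⋯ + x_{π_i})⁻¹`, so the claim is the
hook-length identity `∑_π ∏ᵢ (x_{π_1} + ⋯ + x_{π_i})⁻¹ = ∏ᵢ x_{≼i}⁻¹` for forests. The last entry
of a linear extension is a maximal element `m`, and removing it leaves a linear extension of
`P ∖ {m}`; by induction the extensions ending in `m` contribute
`x_{≼m} / (x_1 + ⋯ + x_n) · ∏ᵢ x_{≼i}⁻¹`. In a forest every element lies below exactly one maximal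
element, so the down-sets of the maximal elements partition the ground set and the `x_{≼m}` add
up to `x_1 + ⋯ + x_n`.
-/

open Finset

namespace FinPoset

section

variable (P : FinPoset n)

def IsMaximal (m : Fin n) : Prop := ∀ b, ¬ P.lt m b

lemma card_filter_le_lt_of_lt {a b : Fin n} (h : P.lt a b) :
    #{j | P.le j a} < #{j | P.le j b} := by
  refine card_lt_card ⟨fun j hj => ?_, fun hsub => ?_⟩
  · simp only [mem_filter, mem_univ, true_and] at hj ⊢
    exact P.le_trans _ _ _ hj h.1
  · have hb := hsub (mem_filter.2 ⟨mem_univ b, P.le_refl b⟩)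
    exact h.2 (P.le_antisymm _ _ h.1 (mem_filter.1 hb).2)

lemma sum_filter_le_pos {x : Fin n → ℝ} (hx : ∀ i, 0 < x i) (i : Fin n) :
    0 < ∑ j with P.le j i, x j :=
  sum_pos (fun j _ => hx j) ⟨i, mem_filter.2 ⟨mem_univ i, P.le_refl i⟩⟩

lemma exists_maximal_mem {s : Finset (Fin n)} (hs : s.Nonempty) :
    ∃ m ∈ s, ∀ b ∈ s, ¬ P.lt m b := by
  obtain ⟨m, hm, hmax⟩ := s.exists_max_image (fun v => #{j | P.le j v}) hs
  exact ⟨m, hm, fun b hb hmb => (hmax b hb).not_gt (P.card_filter_le_lt_of_lt hmb)⟩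

lemma exists_minimal_mem {s : Finset (Fin n)} (hs : s.Nonempty) :
    ∃ m ∈ s, ∀ b ∈ s, ¬ P.lt b m := by
  obtain ⟨m, hm, hmin⟩ := s.exists_min_image (fun v => #{j | P.le j v}) hs
  exact ⟨m, hm, fun b hb hbm => (hmin b hb).not_gt (P.card_filter_le_lt_of_lt hbm)⟩

lemma exists_isCover_le {a b : Fin n} (h : P.lt a b) : ∃ c, IsCover P a c ∧ P.le c b := by
  obtain ⟨c, hc, hmin⟩ := P.exists_minimal_mem (s := {v | P.lt a v ∧ P.le v b})
    ⟨b, by simp [h, P.le_refl]⟩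
  simp only [mem_filter, mem_univ, true_and] at hc hmin
  exact ⟨c, ⟨hc.1, fun z haz hzc => hmin z ⟨haz, P.le_trans _ _ _ hzc.1 hc.2⟩ hzc⟩, hc.2⟩

lemma exists_le_isMaximal (a : Fin n) : ∃ m, P.le a m ∧ P.IsMaximal m := by
  obtain ⟨m, hm, hmax⟩ := P.exists_maximal_mem (s := {v | P.le a v}) ⟨a, by simp [P.le_refl]⟩
  simp only [mem_filter, mem_univ, true_and] at hm hmax
  exact ⟨m, hm, fun b hmb => hmax b (P.le_trans _ _ _ hm hmb.1) hmb⟩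

end

def erase (P : FinPoset (n + 1)) (m : Fin (n + 1)) : FinPoset n where
  le a b := P.le (m.succAbove a) (m.succAbove b)
  le_refl _ := P.le_refl _
  le_trans _ _ _ := P.le_trans _ _ _
  le_antisymm _ _ hab hba := Fin.succAbove_right_injective (P.le_antisymm _ _ hab hba)

lemma erase_lt_iff (P : FinPoset (n + 1)) (m : Fin (n + 1)) {a b : Fin n} :
    (P.erase m).lt a b ↔ P.lt (m.succAbove a) (m.succAbove b) :=
  and_congr_right' Fin.succAbove_right_injective.ne_iff.symm

lemma sum_filter_erase_le {P : FinPoset (n + 1)} {m : Fin (n + 1)} (hm : P.IsMaximal m)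
    (x : Fin (n + 1) → ℝ) (i : Fin n) :
    ∑ j with (P.erase m).le j i, x (m.succAbove j) = ∑ j with P.le j (m.succAbove i), x j := by
  have hmi : ¬ P.le m (m.succAbove i) := fun h => hm _ ⟨h, (Fin.succAbove_ne m i).symm⟩
  rw [sum_filter, sum_filter, Fin.sum_univ_succAbove _ m, if_neg hmi, zero_add]
  rfl

end FinPoset

namespace IsRootedForest

variable {P : FinPoset n}

lemma le_or_le (hP : IsRootedForest P) {a y z : Fin n} (hy : P.le a y) (hz : P.le a z) :
    P.le y z ∨ P.le z y := by
  obtain ⟨w, hw, hmax⟩ := P.exists_maximal_mem (s := {v | P.le a v ∧ P.le v y ∧ P.le v z})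
    ⟨a, by simp [P.le_refl, hy, hz]⟩
  simp only [mem_filter, mem_univ, true_and] at hw hmax
  obtain ⟨haw, hwy, hwz⟩ := hw
  by_cases hy' : w = y
  · exact .inl (hy' ▸ hwz)
  by_cases hz' : w = z
  · exact .inr (hz' ▸ hwy)
  obtain ⟨c, hc, hcy⟩ := P.exists_isCover_le ⟨hwy, hy'⟩
  obtain ⟨c', hc', hcz⟩ := P.exists_isCover_le ⟨hwz, hz'⟩
  obtain rfl := hP w c c' hc hc'
  exact absurd hc.1 (hmax c ⟨P.le_trans _ _ _ haw hc.1.1, hcy, hcz⟩)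

lemma eq_of_le_isMaximal (hP : IsRootedForest P) {a m m' : Fin n} (hm : P.IsMaximal m)
    (hm' : P.IsMaximal m') (ha : P.le a m) (ha' : P.le a m') : m = m' := by
  by_contra hne
  rcases hP.le_or_le ha ha' with h | h
  · exact hm m' ⟨h, hne⟩
  · exact hm' m ⟨h, Ne.symm hne⟩

lemma sum_isMaximal_sum_le (hP : IsRootedForest P) (x : Fin n → ℝ) :
    ∑ m with P.IsMaximal m, ∑ j with P.le j m, x j = ∑ j, x j := by
  simp only [sum_filter (p := fun j => P.le j _)]
  rw [sum_comm]
  refine sum_congr rfl fun j _ => ?_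
  obtain ⟨m, hjm, hm⟩ := P.exists_le_isMaximal j
  rw [sum_eq_single_of_mem m (by simpa using hm), if_pos hjm]
  intro m' hm' hne
  exact if_neg fun hjm' => hne (hP.eq_of_le_isMaximal (by simpa using hm') hm hjm' hjm)

end IsRootedForest

lemma IsRootedForest.erase {P : FinPoset (n + 1)} (hP : IsRootedForest P)
    (m : Fin (n + 1)) : IsRootedForest (P.erase m) := by
  intro a y z hy hz
  by_contra hne
  rcases hP.le_or_le hy.1.1 hz.1.1 with h | h
  · exact hz.2 y hy.1 ((P.erase_lt_iff m).2 ⟨h, Fin.succAbove_right_injective.ne hne⟩)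
  · exact hy.2 z hz.1 ((P.erase_lt_iff m).2 ⟨h, Fin.succAbove_right_injective.ne (Ne.symm hne)⟩)

lemma Equiv.optionCongr_removeNone {α : Type*} {e : Equiv.Perm (Option α)} (he : e none = none) :
    (Equiv.removeNone e).optionCongr = e := by
  ext1 (_ | a)
  · exact he.symm
  · refine Equiv.removeNone_some e ?_
    rw [← Option.ne_none_iff_exists']
    exact fun h => Option.some_ne_none a (e.injective (h.trans he.symm))

/-- In one-line notation: the entries of `σ`, relabelled along `m.succAbove`, followed by `m`. -/
def snocPerm (m : Fin (n + 1)) (σ : Equiv.Perm (Fin n)) : Equiv.Perm (Fin (n + 1)) :=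
  (finSuccEquivLast.trans σ.optionCongr).trans (finSuccEquiv' m).symm

@[simp] lemma snocPerm_castSucc (m : Fin (n + 1)) (σ : Equiv.Perm (Fin n)) (i : Fin n) :
    snocPerm m σ i.castSucc = m.succAbove (σ i) := by
  simp [snocPerm, finSuccEquivLast_castSucc]

@[simp] lemma snocPerm_last (m : Fin (n + 1)) (σ : Equiv.Perm (Fin n)) :
    snocPerm m σ (Fin.last n) = m := by
  simp [snocPerm, finSuccEquivLast_last]

@[simp] lemma snocPerm_symm_self (m : Fin (n + 1)) (σ : Equiv.Perm (Fin n)) :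
    (snocPerm m σ).symm m = Fin.last n := by
  rw [Equiv.symm_apply_eq, snocPerm_last]

@[simp] lemma snocPerm_symm_succAbove (m : Fin (n + 1)) (σ : Equiv.Perm (Fin n)) (a : Fin n) :
    (snocPerm m σ).symm (m.succAbove a) = (σ.symm a).castSucc := by
  rw [Equiv.symm_apply_eq, snocPerm_castSucc, Equiv.apply_symm_apply]

def snocPermEquiv : Fin (n + 1) × Equiv.Perm (Fin n) ≃ Equiv.Perm (Fin (n + 1)) where
  toFun p := snocPerm p.1 p.2
  invFun π := (π (Fin.last n),
    Equiv.removeNone ((finSuccEquivLast.symm.trans π).trans (finSuccEquiv' (π (Fin.last n)))))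
  left_inv := by
    rintro ⟨m, σ⟩
    simp only [snocPerm_last, Prod.mk.injEq, true_and]
    convert Equiv.removeNone_optionCongr σ
    ext1 a
    simp [snocPerm]
  right_inv π := by
    simp only [snocPerm]
    rw [Equiv.optionCongr_removeNone (by simp [finSuccEquiv'_at])]
    ext1 a
    simp

lemma isLinearExtension_snocPerm_iff (P : FinPoset (n + 1)) (m : Fin (n + 1))
    (σ : Equiv.Perm (Fin n)) :
    IsLinearExtension P (snocPerm m σ) ↔ P.IsMaximal m ∧ IsLinearExtension (P.erase m) σ := by
  refine ⟨fun h => ⟨fun b hb => ?_, fun a b hab => ?_⟩, fun ⟨hm, hσ⟩ a b hab => ?_⟩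
  · simpa using (h m b hb).trans_le (Fin.le_last _)
  · simpa using h _ _ ((P.erase_lt_iff m).1 hab)
  · obtain ⟨a, rfl⟩ := Fin.exists_succAbove_eq fun ham : a = m => hm b (ham ▸ hab)
    obtain rfl | hbm := eq_or_ne b m
    · simp
    obtain ⟨b, rfl⟩ := Fin.exists_succAbove_eq hbm
    simpa using hσ a b ((P.erase_lt_iff m).2 hab)

lemma sum_isLinearExtension_eq_sum_isMaximal {M : Type*} [AddCommMonoid M]
    (P : FinPoset (n + 1)) (f : Equiv.Perm (Fin (n + 1)) → M) :
    ∑ π with IsLinearExtension P π, f π =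
      ∑ m with P.IsMaximal m, ∑ σ with IsLinearExtension (P.erase m) σ, f (snocPerm m σ) := by
  rw [sum_sigma']
  refine (sum_equiv ((Equiv.sigmaEquivProd _ _).trans snocPermEquiv) (fun p => ?_)
    fun _ _ => rfl).symm
  simp [snocPermEquiv, isLinearExtension_snocPerm_iff]

lemma prod_inv_partialSums_snocPerm (m : Fin (n + 1)) (σ : Equiv.Perm (Fin n))
    (x : Fin (n + 1) → ℝ) :
    ∏ i, (∑ k ∈ Iic i, x (snocPerm m σ k))⁻¹
      = (∑ j, x j)⁻¹ * ∏ i, (∑ k ∈ Iic i, x (m.succAbove (σ k)))⁻¹ := by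
  rw [Fin.prod_univ_castSucc, mul_comm, ← Fin.top_eq_last, Iic_top,
    Equiv.sum_comp (snocPerm m σ) x]
  simp [Fin.sum_Iic_castSucc]

theorem IsRootedForest.sum_prod_inv_partialSums {P : FinPoset n}
    (hP : IsRootedForest P) {x : Fin n → ℝ} (hx : ∀ i, 0 < x i) :
    ∑ π with IsLinearExtension P π, ∏ i, (∑ k ∈ Iic i, x (π k))⁻¹
      = ∏ i, (∑ j with P.le j i, x j)⁻¹ := by
  induction n with
  | zero => simp [IsLinearExtension]
  | succ n ih =>
    set D : Fin (n + 1) → ℝ := fun i => ∑ j with P.le j i, x j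
    have hD : ∀ i, D i ≠ 0 := fun i => (P.sum_filter_le_pos hx i).ne'
    have htotal : ∑ j, x j ≠ 0 := (sum_pos (fun j _ => hx j) univ_nonempty).ne'
    have hinner : ∀ m, P.IsMaximal m →
        ∑ σ with IsLinearExtension (P.erase m) σ,
            ∏ i, (∑ k ∈ Iic i, x (snocPerm m σ k))⁻¹
          = D m * ((∑ j, x j)⁻¹ * ∏ i, (D i)⁻¹) := by
      intro m hm
      simp only [prod_inv_partialSums_snocPerm, ← mul_sum]
      rw [ih (hP.erase m) (fun _ => hx _), Fin.prod_univ_succAbove _ m, mul_left_comm,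
        mul_inv_cancel_left₀ (hD m)]
      simp only [FinPoset.sum_filter_erase_le hm, D]
    rw [sum_isLinearExtension_eq_sum_isMaximal,
      sum_congr rfl fun m hm => hinner m (by simpa using hm), ← sum_mul, hP.sum_isMaximal_sum_le,
      ← mul_assoc, mul_inv_cancel₀ htotal, one_mul]

/-- For a rooted forest `P`, the weights `Z_P · w(π)` of the promotion Markov chain sum
to `1` over all linear extensions, where
`w(π) = ∏_i (x_1 + ⋯ + x_i)/(x_{π_1} + ⋯ + x_{π_i})` and
`Z_P = ∏_i x_{≼ i} / (x_1 + ⋯ + x_i)` with `x_{≼ i} = Σ_{j ≼ i} x_j`. -/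
theorem partition_function_rooted_forest (P : FinPoset n) (hP : IsRootedForest P)
    (x : Fin n → ℝ) (hx : ∀ i, 0 < x i) :
    ∑ π ∈ Finset.univ.filter (fun π : Equiv.Perm (Fin n) => IsLinearExtension P π),
      (∏ i : Fin n, (∑ j ∈ Finset.univ.filter (fun j => P.le j i), x j) /
          (∑ k ∈ Finset.Iic i, x k)) *
        (∏ i : Fin n, (∑ k ∈ Finset.Iic i, x k) / (∑ k ∈ Finset.Iic i, x (π k))) = 1 := by
  have hS : ∀ i : Fin n, ∑ k ∈ Iic i, x k ≠ 0 := fun i =>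
    (sum_pos (fun k _ => hx k) ⟨i, mem_Iic.2 le_rfl⟩).ne'
  calc _ = ∑ π with IsLinearExtension P π,
        (∏ i, ∑ j with P.le j i, x j) * ∏ i, (∑ k ∈ Iic i, x (π k))⁻¹ := by
        refine sum_congr rfl fun π _ => ?_
        rw [← prod_mul_distrib, ← prod_mul_distrib]
        exact prod_congr rfl fun i _ => by field_simp [hS i]
    _ = 1 := by
        rw [← mul_sum, hP.sum_prod_inv_partialSums hx, ← prod_mul_distrib]
        exact prod_eq_one fun i _ => mul_inv_cancel₀ (P.sum_filter_le_pos hx i).ne'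
end

section
/- Let P be a rooted forest on [n] and π a linear extension of P. Then π ∂̂_i (applying extended promotion with seed at the position of letter i) equals the linear extension obtained from π by moving the letter i to position n and reordering all letters j ≽ i in P increasingly along their (unique) chain order. -/
open scoped Classical

variable {n : ℕ}

/-- The word obtained from `π` (one-line notation) by removing the letter `i` and
appending it at the last position. -/
noncomputable def movedWord (π : Equiv.Perm (Fin n)) (i : Fin n) (k : Fin n) : Fin n :=
  if (k : ℕ) < ((π.symm i : Fin n) : ℕ) then π k
  else if h : (k : ℕ) + 1 < n then π ⟨(k : ℕ) + 1, h⟩ else i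


/-!
In a rooted forest the letters `≽ i` form a chain, and any linear extension lists them in chain
order. Applying `τ_p, τ_{p+1}, …` from `p = π⁻¹ i` carries a chain letter to the right: it is
swapped past every letter not above `i`, and when it meets the next chain letter the two are
comparable, so that letter is carried on instead. Hence every slot of the moved word holding a
letter `≽ i` receives the last chain letter met so far, and the `r`-th such slot receives the
`r`-th chain letter.
-/

namespace FinPoset

variable (P : FinPoset n)

lemma lt_trans {a b c : Fin n} (hab : P.lt a b) (hbc : P.lt b c) : P.lt a c := by
  refine ⟨P.le_trans a b c hab.1 hbc.1, ?_⟩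
  rintro rfl
  exact hab.2 (P.le_antisymm a b hab.1 hbc.1)

instance : IsTrans (Fin n) P.lt := ⟨fun _ _ _ => P.lt_trans⟩

instance : Std.Irrefl P.lt := ⟨fun _ h => h.2 rfl⟩

lemma wellFounded_lt : WellFounded P.lt := Finite.wellFounded_of_trans_of_irrefl P.lt

lemma wellFounded_gt : WellFounded (flip P.lt) := by
  have : IsTrans (Fin n) (flip P.lt) := ⟨fun _ _ _ hab hbc => P.lt_trans hbc hab⟩
  have : Std.Irrefl (flip P.lt) := ⟨fun _ h => h.2 rfl⟩
  exact Finite.wellFounded_of_trans_of_irrefl _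

lemma exists_cover_le {a d : Fin n} (had : P.lt a d) : ∃ m, IsCover P a m ∧ P.le m d := by
  obtain ⟨m, ⟨ham, hmd⟩, hmin⟩ :=
    P.wellFounded_lt.has_min {z | P.lt a z ∧ P.le z d} ⟨d, had, P.le_refl d⟩
  exact ⟨m, ⟨ham, fun z haz hzm => hmin z ⟨haz, P.le_trans z m d hzm.1 hmd⟩ hzm⟩, hmd⟩

end FinPoset

lemma IsRootedForest.le_total_of_le {P : FinPoset n} (hP : IsRootedForest P) {a b c : Fin n}
    (hb : P.le a b) (hc : P.le a c) : P.le b c ∨ P.le c b := by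
  induction a using P.wellFounded_gt.induction with
  | _ a ih =>
  by_cases hab : a = b
  · exact hab ▸ Or.inl hc
  by_cases hac : a = c
  · exact hac ▸ Or.inr hb
  obtain ⟨m, ham, hmb⟩ := P.exists_cover_le ⟨hb, hab⟩
  obtain ⟨m', ham', hmc⟩ := P.exists_cover_le ⟨hc, hac⟩
  obtain rfl := hP a m m' ham ham'
  exact ih m ham.1 hmb hmc

lemma IsLinearExtension.symm_le_symm {P : FinPoset n} {π : Equiv.Perm (Fin n)}
    (hπ : IsLinearExtension P π) {a b : Fin n} (h : P.le a b) : π.symm a ≤ π.symm b := by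
  rcases eq_or_ne a b with rfl | hne
  · exact le_rfl
  · exact (hπ a b ⟨h, hne⟩).le

lemma IsLinearExtension.not_le_apply_of_lt {P : FinPoset n} {π : Equiv.Perm (Fin n)}
    (hπ : IsLinearExtension P π) {i k : Fin n} (hk : k < π.symm i) : ¬ P.le i (π k) := fun h =>
  (hπ.symm_le_symm h).not_gt (by simpa using hk)

lemma IsLinearExtension.le_iff_symm_le {P : FinPoset n} (hP : IsRootedForest P)
    {π : Equiv.Perm (Fin n)} (hπ : IsLinearExtension P π) {i u v : Fin n} (hu : P.le i u)
    (hv : P.le i v) : P.le u v ↔ π.symm u ≤ π.symm v := by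
  refine ⟨hπ.symm_le_symm, fun h => ?_⟩
  rcases hP.le_total_of_le hu hv with huv | hvu
  · exact huv
  · obtain rfl : u = v := π.symm.injective (le_antisymm h (hπ.symm_le_symm hvu))
    exact P.le_refl u

/-- The last position `≤ K` at which `π` carries a letter `≽ i` (junk value `π⁻¹ i` if there is
none). -/
noncomputable def lastChainPos (P : FinPoset n) (i : Fin n) (π : Equiv.Perm (Fin n)) (K : ℕ) :
    Fin n :=
  ((Finset.univ.filter fun m : Fin n => (m : ℕ) ≤ K ∧ P.le i (π m)).max).getD (π.symm i)

section lastChainPos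

variable {P : FinPoset n} {i : Fin n} {π : Equiv.Perm (Fin n)} {K : ℕ}

lemma lastChainPos_isGreatest {m : Fin n} (hm : (m : ℕ) ≤ K) (hU : P.le i (π m)) :
    IsGreatest {m : Fin n | (m : ℕ) ≤ K ∧ P.le i (π m)} (lastChainPos P i π K) := by
  set S := Finset.univ.filter fun m : Fin n => (m : ℕ) ≤ K ∧ P.le i (π m) with hS
  obtain ⟨l, hl⟩ := Finset.max_of_nonempty (s := S) ⟨m, by simp [hS, hm, hU]⟩
  have hlast : lastChainPos P i π K = l := by rw [lastChainPos, ← hS, hl]; rfl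
  rw [hlast]
  refine ⟨by simpa [hS] using Finset.mem_of_max hl, fun m' hm' => ?_⟩
  exact Finset.le_max_of_eq (by simpa [hS] using hm') hl

lemma lastChainPos_le (hK : (π.symm i : ℕ) ≤ K) : (lastChainPos P i π K : ℕ) ≤ K :=
  (lastChainPos_isGreatest (m := π.symm i) hK (by simpa using P.le_refl i)).1.1

lemma le_lastChainPos_apply (hK : (π.symm i : ℕ) ≤ K) : P.le i (π (lastChainPos P i π K)) :=
  (lastChainPos_isGreatest (m := π.symm i) hK (by simpa using P.le_refl i)).1.2

lemma le_lastChainPos {m : Fin n} (hm : (m : ℕ) ≤ K) (hU : P.le i (π m)) :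
    m ≤ lastChainPos P i π K :=
  (lastChainPos_isGreatest hm hU).2 ⟨hm, hU⟩

lemma lastChainPos_self {m : Fin n} (hU : P.le i (π m)) : lastChainPos P i π m = m :=
  le_antisymm (lastChainPos_isGreatest le_rfl hU).1.1 (le_lastChainPos le_rfl hU)

lemma lastChainPos_succ (hK : (π.symm i : ℕ) ≤ K) (h : K + 1 < n)
    (hU : ¬ P.le i (π ⟨K + 1, h⟩)) : lastChainPos P i π (K + 1) = lastChainPos P i π K := by
  have hmem := lastChainPos_isGreatest (P := P) (π := π) (m := π.symm i) (K := K + 1)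
    (by omega) (by simpa using P.le_refl i)
  refine le_antisymm ?_ (le_lastChainPos ((lastChainPos_le hK).trans K.le_succ)
    (le_lastChainPos_apply hK))
  refine le_lastChainPos ?_ hmem.1.2
  have hne : (lastChainPos P i π (K + 1) : ℕ) ≠ K + 1 := fun he =>
    hU ((Fin.ext he : lastChainPos P i π (K + 1) = ⟨K + 1, h⟩) ▸ hmem.1.2)
  have := hmem.1.1
  omega

lemma le_lastChainPos_apply_iff (hP : IsRootedForest P) (hπ : IsLinearExtension P π)
    (hK : (π.symm i : ℕ) ≤ K) {v : Fin n} (hv : P.le i v) :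
    P.le v (π (lastChainPos P i π K)) ↔ (π.symm v : ℕ) ≤ K := by
  rw [hπ.le_iff_symm_le hP hv (le_lastChainPos_apply hK), Equiv.symm_apply_apply]
  refine ⟨fun h => (Fin.le_def.mp h).trans (lastChainPos_le hK), fun h => ?_⟩
  exact le_lastChainPos h (by simpa using hv)

end lastChainPos

section tauOp

variable {P : FinPoset n} {j : ℕ} {σ : Equiv.Perm (Fin n)}

lemma tauOp_eq_self_of_le (h : j + 1 < n) (hle : P.le (σ ⟨j, by omega⟩) (σ ⟨j + 1, h⟩)) :
    tauOp P j σ = σ := by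
  rw [tauOp, dif_pos h, if_neg fun hc => hc.1 hle]

lemma tauOp_eq_mul_swap (h : j + 1 < n) (hlr : ¬ P.le (σ ⟨j, by omega⟩) (σ ⟨j + 1, h⟩))
    (hrl : ¬ P.le (σ ⟨j + 1, h⟩) (σ ⟨j, by omega⟩)) :
    tauOp P j σ = σ * Equiv.swap ⟨j, by omega⟩ ⟨j + 1, h⟩ := by
  rw [tauOp, dif_pos h, if_pos ⟨hlr, hrl⟩]

end tauOp

/-- The first `t` factors `τ_j τ_{j+1} ⋯ τ_{j+t-1}` of `∂_j`, applied to `π`. -/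
noncomputable def partialPromo (P : FinPoset n) (j : ℕ) (π : Equiv.Perm (Fin n)) (t : ℕ) :
    Equiv.Perm (Fin n) :=
  (List.range t).foldl (fun σ k => tauOp P (j + k) σ) π

lemma partialPromo_zero (P : FinPoset n) (j : ℕ) (π : Equiv.Perm (Fin n)) :
    partialPromo P j π 0 = π := rfl

lemma partialPromo_succ (P : FinPoset n) (j : ℕ) (π : Equiv.Perm (Fin n)) (t : ℕ) :
    partialPromo P j π (t + 1) = tauOp P (j + t) (partialPromo P j π t) := by
  rw [partialPromo, List.range_succ, List.foldl_append]
  rfl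

lemma promoOp_eq_partialPromo (P : FinPoset n) (j : ℕ) (π : Equiv.Perm (Fin n)) :
    promoOp P j π = partialPromo P j π (n - 1 - j) := rfl

/-- The word `π` with its block of positions `p, …, p + t` rotated one step to the left. -/
noncomputable def rotateBlock (π : Equiv.Perm (Fin n)) (p : Fin n) (t : ℕ) (k : Fin n) :
    Fin n :=
  if (k : ℕ) < p ∨ (p : ℕ) + t < k then π k
  else if h : (k : ℕ) < p + t ∧ (k : ℕ) + 1 < n then π ⟨k + 1, h.2⟩ else π p

lemma rotateBlock_eq_movedWord (π : Equiv.Perm (Fin n)) (i : Fin n) :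
    rotateBlock π (π.symm i) (n - 1 - π.symm i) = movedWord π i := by
  funext k
  have := k.isLt
  have := (π.symm i).isLt
  unfold rotateBlock movedWord
  split_ifs <;> first | rfl | omega | simp

/-- `π τ_p ⋯ τ_{p+t-1}` for `p = π⁻¹ i`: the block `p, …, p + t` of `π` rotated to the left,
with the letters `≽ i` inside it then sorted along their chain. -/
noncomputable def bubbleWord (P : FinPoset n) (i : Fin n) (π : Equiv.Perm (Fin n)) (t : ℕ)
    (k : Fin n) : Fin n :=
  if (k : ℕ) ≤ π.symm i + t ∧ P.le i (rotateBlock π (π.symm i) t k) then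
    π (lastChainPos P i π k)
  else rotateBlock π (π.symm i) t k

section bubbleWord

variable {P : FinPoset n} {i : Fin n} {π : Equiv.Perm (Fin n)} {t : ℕ} {k : Fin n}

lemma bubbleWord_apply_of_lt (hπ : IsLinearExtension P π) (hk : k < π.symm i) :
    bubbleWord P i π t k = π k := by
  have hk' : (k : ℕ) < π.symm i := hk
  simp [bubbleWord, rotateBlock, hk', hπ.not_le_apply_of_lt hk]

lemma bubbleWord_apply_of_gt (hk : (π.symm i : ℕ) + t < k) : bubbleWord P i π t k = π k := by
  simp [bubbleWord, rotateBlock, hk, hk.not_ge]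

lemma bubbleWord_apply_of_eq (hk : (k : ℕ) = π.symm i + t) :
    bubbleWord P i π t k = π (lastChainPos P i π k) := by
  simp [bubbleWord, rotateBlock, hk, P.le_refl]

lemma bubbleWord_apply_of_mem_block (hpk : (π.symm i : ℕ) ≤ k) (hk : (k : ℕ) < π.symm i + t)
    (h : (k : ℕ) + 1 < n) :
    bubbleWord P i π t k =
      if P.le i (π ⟨k + 1, h⟩) then π (lastChainPos P i π k) else π ⟨k + 1, h⟩ := by
  simp [bubbleWord, rotateBlock, hk, hk.le, hpk.not_gt, hk.not_gt, h]

lemma bubbleWord_succ_apply (hk : (k : ℕ) ≠ π.symm i + t)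
    (hk' : (k : ℕ) ≠ π.symm i + t + 1) :
    bubbleWord P i π (t + 1) k = bubbleWord P i π t k := by
  have hrot : rotateBlock π (π.symm i) (t + 1) k = rotateBlock π (π.symm i) t k := by
    unfold rotateBlock
    split_ifs <;> first | rfl | omega
  have hle : (k : ℕ) ≤ π.symm i + (t + 1) ↔ (k : ℕ) ≤ π.symm i + t := by omega
  simp only [bubbleWord, hrot, hle]

end bubbleWord

section bubbleStep

variable {P : FinPoset n} {i : Fin n} {π : Equiv.Perm (Fin n)} {t : ℕ}
  {σ : Equiv.Perm (Fin n)}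

lemma tauOp_apply_eq_bubbleWord_succ_of_le (hP : IsRootedForest P)
    (hπ : IsLinearExtension P π)
    (hσ : ∀ k, σ k = bubbleWord P i π t k) (hj : (π.symm i : ℕ) + t + 1 < n)
    (hU : P.le i (π ⟨π.symm i + t + 1, hj⟩)) (k : Fin n) :
    tauOp P (π.symm i + t) σ k = bubbleWord P i π (t + 1) k := by
  set p : ℕ := (π.symm i : ℕ) with hp
  have hσj : σ ⟨p + t, by omega⟩ = π (lastChainPos P i π (p + t)) :=
    (hσ _).trans (bubbleWord_apply_of_eq rfl)
  have hσj' : σ ⟨p + t + 1, hj⟩ = π ⟨p + t + 1, hj⟩ :=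
    (hσ _).trans (bubbleWord_apply_of_gt (show p + t < p + t + 1 by omega))
  have hstay : tauOp P (p + t) σ = σ := by
    refine tauOp_eq_self_of_le hj ?_
    rw [hσj, hσj', hπ.le_iff_symm_le hP (le_lastChainPos_apply (by omega)) hU,
      Equiv.symm_apply_apply, Equiv.symm_apply_apply, Fin.le_def]
    exact (lastChainPos_le (by omega)).trans (Nat.le_succ _)
  rw [hstay]
  rcases eq_or_ne (k : ℕ) (p + t) with hk | hk
  · obtain rfl : k = ⟨p + t, Nat.lt_of_succ_lt hj⟩ := Fin.ext hk
    rw [hσj, bubbleWord_apply_of_mem_block le_self_add (by omega) hj, if_pos hU]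
  rcases eq_or_ne (k : ℕ) (p + t + 1) with hk' | hk'
  · obtain rfl : k = ⟨p + t + 1, hj⟩ := Fin.ext hk'
    rw [hσj', bubbleWord_apply_of_eq rfl, lastChainPos_self hU]
  · rw [hσ, bubbleWord_succ_apply hk hk']

/-- The carried letter is incomparable to a letter `⋡ i` to its right: that letter is not above
it (else it would be `≽ i`), nor below it (it stands to its right in `π`). -/
lemma tauOp_apply_eq_bubbleWord_succ_of_not_le (hπ : IsLinearExtension P π)
    (hσ : ∀ k, σ k = bubbleWord P i π t k) (hj : (π.symm i : ℕ) + t + 1 < n)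
    (hU : ¬ P.le i (π ⟨π.symm i + t + 1, hj⟩)) (k : Fin n) :
    tauOp P (π.symm i + t) σ k = bubbleWord P i π (t + 1) k := by
  set p : ℕ := (π.symm i : ℕ) with hp
  have hσj : σ ⟨p + t, by omega⟩ = π (lastChainPos P i π (p + t)) :=
    (hσ _).trans (bubbleWord_apply_of_eq rfl)
  have hσj' : σ ⟨p + t + 1, hj⟩ = π ⟨p + t + 1, hj⟩ :=
    (hσ _).trans (bubbleWord_apply_of_gt (show p + t < p + t + 1 by omega))
  have hswap : tauOp P (p + t) σ = σ * Equiv.swap ⟨p + t, by omega⟩ ⟨p + t + 1, hj⟩ := by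
    refine tauOp_eq_mul_swap hj ?_ ?_ <;> rw [hσj, hσj']
    · exact fun h => hU (P.le_trans _ _ _ (le_lastChainPos_apply (by omega)) h)
    · intro h
      have hpos := Fin.le_def.mp (hπ.symm_le_symm h)
      rw [Equiv.symm_apply_apply, Equiv.symm_apply_apply, Fin.val_mk] at hpos
      have := lastChainPos_le (P := P) (π := π) (i := i) (K := p + t) (by omega)
      omega
  rw [hswap, Equiv.Perm.mul_apply]
  rcases eq_or_ne (k : ℕ) (p + t) with hk | hk
  · obtain rfl : k = ⟨p + t, Nat.lt_of_succ_lt hj⟩ := Fin.ext hk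
    rw [Equiv.swap_apply_left, hσj', bubbleWord_apply_of_mem_block le_self_add (by omega) hj,
      if_neg hU]
  rcases eq_or_ne (k : ℕ) (p + t + 1) with hk' | hk'
  · obtain rfl : k = ⟨p + t + 1, hj⟩ := Fin.ext hk'
    rw [Equiv.swap_apply_right, hσj, bubbleWord_apply_of_eq rfl,
      lastChainPos_succ (by omega) hj hU]
  · rw [Equiv.swap_apply_of_ne_of_ne (Fin.ne_of_val_ne hk) (Fin.ne_of_val_ne hk'), hσ,
      bubbleWord_succ_apply hk hk']

end bubbleStep

lemma partialPromo_apply {P : FinPoset n} (hP : IsRootedForest P) {i : Fin n}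
    {π : Equiv.Perm (Fin n)} (hπ : IsLinearExtension P π) (t : ℕ)
    (ht : (π.symm i : ℕ) + t < n) (k : Fin n) :
    partialPromo P (π.symm i) π t k = bubbleWord P i π t k := by
  induction t generalizing k with
  | zero =>
    rw [partialPromo_zero]
    rcases lt_trichotomy k (π.symm i) with hk | rfl | hk
    · exact (bubbleWord_apply_of_lt hπ hk).symm
    · rw [bubbleWord_apply_of_eq rfl, lastChainPos_self (by simpa using P.le_refl i)]
    · exact (bubbleWord_apply_of_gt hk).symm
  | succ t ih =>
    have hσ := ih (by omega)
    have hj : (π.symm i : ℕ) + t + 1 < n := by omega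
    rw [partialPromo_succ]
    by_cases hU : P.le i (π ⟨π.symm i + t + 1, hj⟩)
    · exact tauOp_apply_eq_bubbleWord_succ_of_le hP hπ hσ hj hU k
    · exact tauOp_apply_eq_bubbleWord_succ_of_not_le hπ hσ hj hU k

/-- `W m` and `Q m` say that position `m` of two words holds a marked letter, the first word
being the second with its marked letter at position `p` deleted. -/
lemma card_filter_range_add_one {W Q : ℕ → Prop} [DecidablePred W] [DecidablePred Q]
    {p N : ℕ}
    (hW : ∀ m < p, ¬ W m) (hQ : ∀ m < p, ¬ Q m) (hQp : Q p)
    (hWQ : ∀ m, p ≤ m → m < N → (W m ↔ Q (m + 1))) {K : ℕ} (hpK : p ≤ K) (hKN : K ≤ N) :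
    ((Finset.range (K + 1)).filter W).card + 1 =
      ((Finset.range (K + 1)).filter Q).card + if W K then 1 else 0 := by
  simp only [Finset.card_filter]
  induction K, hpK using Nat.le_induction with
  | base =>
    have hW0 : ∑ m ∈ Finset.range p, (if W m then 1 else 0) = 0 :=
      Finset.sum_eq_zero fun m hm => if_neg (hW m (Finset.mem_range.mp hm))
    have hQ0 : ∑ m ∈ Finset.range p, (if Q m then 1 else 0) = 0 :=
      Finset.sum_eq_zero fun m hm => if_neg (hQ m (Finset.mem_range.mp hm))
    rw [Finset.sum_range_succ, Finset.sum_range_succ, hW0, hQ0, if_pos hQp]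
    omega
  | succ K hpK ih =>
    rw [Finset.sum_range_succ, Finset.sum_range_succ _ (K + 1),
      if_congr (hWQ K hpK (by omega)).symm rfl rfl]
    have := ih (by omega)
    omega

lemma Fin.card_filter_Iic (f : Fin n → Prop) [DecidablePred f] (k : Fin n) :
    ((Finset.Iic k).filter f).card =
      ((Finset.range (k + 1)).filter fun m => ∃ h : m < n, f ⟨m, h⟩).card := by
  rw [Nat.range_succ_eq_Iic, ← Fin.map_valEmbedding_Iic, Finset.filter_map, Finset.card_map]
  congr 1
  exact Finset.filter_congr fun m _ => by simp

section promoOp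

variable {P : FinPoset n} {i : Fin n} {π : Equiv.Perm (Fin n)}

lemma promoOp_apply (hP : IsRootedForest P) (hπ : IsLinearExtension P π) (k : Fin n) :
    promoOp P (π.symm i) π k =
      if P.le i (movedWord π i k) then π (lastChainPos P i π k) else movedWord π i k := by
  have hp := (π.symm i).isLt
  have hk := k.isLt
  rw [promoOp_eq_partialPromo, partialPromo_apply hP hπ _ (by omega), bubbleWord,
    rotateBlock_eq_movedWord]
  simp only [show (k : ℕ) ≤ π.symm i + (n - 1 - π.symm i) by omega, true_and]

lemma IsLinearExtension.symm_le_of_le_movedWord (hπ : IsLinearExtension P π) {k : Fin n}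
    (h : P.le i (movedWord π i k)) : (π.symm i : ℕ) ≤ k := by
  by_contra! hk
  rw [movedWord, if_pos hk] at h
  exact hπ.not_le_apply_of_lt hk h

lemma IsLinearExtension.card_filter_le_movedWord (hπ : IsLinearExtension P π) {k : Fin n}
    (hk : P.le i (movedWord π i k)) :
    ((Finset.Iic k).filter fun k' => P.le i (movedWord π i k')).card =
      ((Finset.Iic k).filter fun m => P.le i (π m)).card := by
  have hp := (π.symm i).isLt
  rw [Fin.card_filter_Iic, Fin.card_filter_Iic, ← Nat.add_right_cancel_iff (n := 1)]
  refine (card_filter_range_add_one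
    (W := fun m => ∃ h : m < n, P.le i (movedWord π i ⟨m, h⟩))
    (Q := fun m => ∃ h : m < n, P.le i (π ⟨m, h⟩)) (p := π.symm i) (N := n - 1) ?_ ?_ ?_ ?_
    (hπ.symm_le_of_le_movedWord hk) (by omega)).trans ?_
  · rintro m hm ⟨h, hU⟩
    rw [movedWord, if_pos hm] at hU
    exact hπ.not_le_apply_of_lt hm hU
  · rintro m hm ⟨h, hU⟩
    exact hπ.not_le_apply_of_lt hm hU
  · exact ⟨hp, by simpa using P.le_refl i⟩
  · intro m hpm hmN
    have hm : ¬ m < π.symm i := by omega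
    simp [movedWord, hm, show m + 1 < n by omega, show m < n by omega]
  · simp [hk]

lemma card_filter_le_lastChainPos (hP : IsRootedForest P) (hπ : IsLinearExtension P π)
    {k : Fin n} (hk : (π.symm i : ℕ) ≤ k) :
    ((Finset.univ.filter fun j => P.le i j).filter
        fun v => P.le v (π (lastChainPos P i π k))).card =
      ((Finset.Iic k).filter fun m => P.le i (π m)).card := by
  refine Finset.card_equiv π.symm fun v => ?_
  simp only [Finset.mem_filter, Finset.mem_univ, true_and, Finset.mem_Iic,
    Equiv.apply_symm_apply]
  constructor
  · rintro ⟨hv, hvk⟩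
    exact ⟨(le_lastChainPos_apply_iff hP hπ hk hv).1 hvk, hv⟩
  · rintro ⟨hvk, hv⟩
    exact ⟨hv, (le_lastChainPos_apply_iff hP hπ hk hv).2 hvk⟩

end promoOp

/-- Let `P` be a rooted forest and `π` a linear extension of `P`.  Then
`π ∂̂_i = π ∂_{π⁻¹(i)}` is the linear extension obtained from `π` by moving the letter
`i` to the last position and reordering the letters `j ≽ i` increasingly along their
chain: at positions where the moved word carries a letter not above `i`, `π ∂̂_i`
agrees with the moved word, and the positions carrying letters above `i` are filled
with those letters in increasing `P`-order (the `r`-th such position gets the `r`-th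
smallest element of the chain `{j : j ≽ i}`). -/
theorem promo_moves_letter_rooted_forest (P : FinPoset n) (hP : IsRootedForest P)
    (i : Fin n) (π : Equiv.Perm (Fin n)) (hπ : IsLinearExtension P π) (k : Fin n) :
    (movedWord π i k ∉ Finset.univ.filter (fun j => P.le i j) →
        promoOp P ((π.symm i : ℕ)) π k = movedWord π i k) ∧
    (movedWord π i k ∈ Finset.univ.filter (fun j => P.le i j) →
        promoOp P ((π.symm i : ℕ)) π k ∈ Finset.univ.filter (fun j => P.le i j) ∧
        ((Finset.Iic k).filter (fun k' => movedWord π i k' ∈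
            Finset.univ.filter (fun j => P.le i j))).card =
          ((Finset.univ.filter (fun j => P.le i j)).filter
            (fun v => P.le v (promoOp P ((π.symm i : ℕ)) π k))).card) := by
  simp only [Finset.mem_filter, Finset.mem_univ, true_and, promoOp_apply hP hπ k]
  refine ⟨fun hk => if_neg hk, fun hk => ?_⟩
  have hpk := hπ.symm_le_of_le_movedWord hk
  rw [if_pos hk, hπ.card_filter_le_movedWord hk, card_filter_le_lastChainPos hP hπ hpk]
  exact ⟨le_lastChainPos_apply hpk, rfl⟩
end

section
/- For a rooted forest P on [n], every linear extension in the image of ∂̂_i ends with the unique maximal element of the tree of P containing i (i.e., the top of the chain above i). -/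
open scoped Classical

variable {n : ℕ}

/-- Partial fold of the promotion operator: the first `m` steps of `∂_j`. -/
noncomputable def promoFold (P : FinPoset n) (j m : ℕ) (π : Equiv.Perm (Fin n)) :
    Equiv.Perm (Fin n) :=
  (List.range m).foldl (fun σ k => tauOp P (j + k) σ) π

lemma promoFold_succ (P : FinPoset n) (j m : ℕ) (π : Equiv.Perm (Fin n)) :
    promoFold P j (m + 1) π = tauOp P (j + m) (promoFold P j m π) := by
  simp [promoFold, List.range_succ]

lemma tauOp_swap (P : FinPoset n) {k : ℕ} (h : k + 1 < n) (σ : Equiv.Perm (Fin n))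
    (hc : ¬ P.le (σ ⟨k, Nat.lt_of_succ_lt h⟩) (σ ⟨k + 1, h⟩) ∧
      ¬ P.le (σ ⟨k + 1, h⟩) (σ ⟨k, Nat.lt_of_succ_lt h⟩)) :
    tauOp P k σ = σ * Equiv.swap ⟨k, Nat.lt_of_succ_lt h⟩ ⟨k + 1, h⟩ := by
  rw [tauOp, dif_pos h, if_pos hc]

lemma tauOp_noswap (P : FinPoset n) {k : ℕ} (h : k + 1 < n) (σ : Equiv.Perm (Fin n))
    (hc : ¬ (¬ P.le (σ ⟨k, Nat.lt_of_succ_lt h⟩) (σ ⟨k + 1, h⟩) ∧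
      ¬ P.le (σ ⟨k + 1, h⟩) (σ ⟨k, Nat.lt_of_succ_lt h⟩))) :
    tauOp P k σ = σ := by
  rw [tauOp, dif_pos h, if_neg hc]

/-- The key invariant of the promotion sweep, by induction on the number of steps. -/
lemma promo_key (P : FinPoset n) (π : Equiv.Perm (Fin n))
    (hπ : IsLinearExtension P π) (i t : Fin n)
    (hit : P.le i t) (htop : ∀ j : Fin n, P.le i j → P.le j t) (m : ℕ) :
    ∀ hk : (π.symm i : ℕ) + m < n,
      (∀ p : Fin n, (π.symm i : ℕ) + m < (p : ℕ) →
        promoFold P (π.symm i : ℕ) m π p = π p) ∧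
      P.le i (promoFold P (π.symm i : ℕ) m π ⟨(π.symm i : ℕ) + m, hk⟩) ∧
      ((π.symm (promoFold P (π.symm i : ℕ) m π ⟨(π.symm i : ℕ) + m, hk⟩) : ℕ)
        ≤ (π.symm i : ℕ) + m) ∧
      (promoFold P (π.symm i : ℕ) m π ⟨(π.symm i : ℕ) + m, hk⟩ = t ∨
        (π.symm i : ℕ) + m < (π.symm t : ℕ)) := by
  induction m with
  | zero =>
    intro hk
    have hσ : promoFold P (π.symm i : ℕ) 0 π = π := rfl
    have hfin : (⟨(π.symm i : ℕ) + 0, hk⟩ : Fin n) = π.symm i := by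
      ext; simp
    rw [hσ, hfin, Equiv.apply_symm_apply]
    refine ⟨fun p _ => rfl, P.le_refl i, by omega, ?_⟩
    by_cases hit' : i = t
    · exact Or.inl hit'
    · exact Or.inr (by simpa using hπ i t ⟨hit, hit'⟩)
  | succ m ih =>
    intro hk
    have hk' : (π.symm i : ℕ) + m < n := by omega
    obtain ⟨hA, hB, hC, hD⟩ := ih hk'
    set j : ℕ := (π.symm i : ℕ) with hj
    set σ := promoFold P j m π with hσ
    have hlt : (j + m) + 1 < n := by omega
    set x : Fin n := ⟨j + m, Nat.lt_of_succ_lt hlt⟩ with hx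
    set y : Fin n := ⟨(j + m) + 1, hlt⟩ with hy
    have hyval : ((y : Fin n) : ℕ) = j + m + 1 := rfl
    have hby : σ y = π y := hA y (by simp [hy])
    have hxy : x ≠ y := by
      simp [hx, hy, Fin.ext_iff]
    have hab : σ x ≠ σ y := fun h => hxy (σ.injective h)
    -- the tracked element is below `t`
    have hxt : P.le (σ x) t := htop _ hB
    have hfold : promoFold P j (m + 1) π = tauOp P (j + m) σ := promoFold_succ P j m π
    have hpos : (⟨j + (m + 1), hk⟩ : Fin n) = y := by
      simp [hy, Fin.ext_iff]; omega
    by_cases hc : ¬ P.le (σ x) (σ y) ∧ ¬ P.le (σ y) (σ x)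
    · -- swap case: the tracked element `σ x` moves to position `y`
      have hτ : tauOp P (j + m) σ = σ * Equiv.swap x y := tauOp_swap P hlt σ hc
      have hval : ∀ p : Fin n, j + (m + 1) < (p : ℕ) →
          (σ * Equiv.swap x y) p = σ p := by
        intro p hp
        have h1 : p ≠ x := by
          intro h; rw [h] at hp
          have : j + (m + 1) < j + m := by simpa [hx] using hp
          omega
        have h2 : p ≠ y := by
          intro h; rw [h] at hp
          have : j + (m + 1) < j + m + 1 := by simpa [hy] using hp
          omega
        simp [Equiv.Perm.mul_apply, Equiv.swap_apply_of_ne_of_ne h1 h2]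
      have hentry : (σ * Equiv.swap x y) y = σ x := by
        simp [Equiv.Perm.mul_apply]
      rw [hfold, hτ, hpos, hentry]
      refine ⟨?_, hB, by omega, ?_⟩
      · intro p hp
        rw [hval p hp]
        exact hA p (by omega)
      · rcases hD with hD | hD
        · exact Or.inl hD
        · refine Or.inr ?_
          rcases Nat.lt_or_ge (j + m + 1) (π.symm t : ℕ) with h | h
          · omega
          · exfalso
            have hty : π.symm t = y := by
              ext; simp [hy]; omega
            have : σ y = t := by
              rw [hby, ← hty, Equiv.apply_symm_apply]
            exact hc.1 (this ▸ hxt)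
    · -- no swap: the entry `σ y` becomes the tracked element
      have hτ : tauOp P (j + m) σ = σ := tauOp_noswap P hlt σ hc
      -- comparability means `σ x ≼ σ y`
      have hle : P.le (σ x) (σ y) := by
        by_contra hle
        have hle' : P.le (σ y) (σ x) := by tauto
        have := hπ (σ y) (σ x) ⟨hle', hab.symm⟩
        rw [hby, Equiv.symm_apply_apply] at this
        have : (y : ℕ) < (π.symm (σ x) : ℕ) := this
        rw [hyval] at this
        omega
      have hsymm : (π.symm (σ y) : ℕ) = j + m + 1 := by
        rw [hby, Equiv.symm_apply_apply, hyval]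
      rw [hfold, hτ, hpos]
      refine ⟨fun p hp => hA p (by omega), P.le_trans _ _ _ hB hle, by omega, ?_⟩
      by_cases hyt : σ y = t
      · exact Or.inl hyt
      · refine Or.inr ?_
        rcases hD with hD | hD
        · exfalso
          -- tracked was already `t`, but then `t ≼ σ y` forces `σ y = t`
          rw [hD] at hle
          have h1 : P.le i (σ y) := P.le_trans _ _ _ hit hle
          have h2 : P.le (σ y) t := htop _ h1
          exact hyt (P.le_antisymm _ _ h2 hle)
        · -- position of `t` is strictly beyond `j + m`, and isn't `j + m + 1`
          rcases Nat.lt_or_ge (j + m + 1) (π.symm t : ℕ) with h | h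
          · omega
          · exfalso
            have hty : π.symm t = y := by
              ext; simp [hy]; omega
            have : σ y = t := by
              rw [hby, ← hty, Equiv.apply_symm_apply]
            exact hyt this
/-- For a rooted forest `P`, every linear extension in the image of
`∂̂_i : π ↦ π ∂_{π⁻¹(i)}` ends with the unique maximal element `t` of the chain
`{j : j ≽ i}` (the top of the tree containing `i`). -/
theorem promo_image_ends_with_top (hn : 0 < n) (P : FinPoset n) (hP : IsRootedForest P)
    (i : Fin n) (π : Equiv.Perm (Fin n)) (hπ : IsLinearExtension P π)
    (t : Fin n) (ht : P.le i t ∧ ∀ j : Fin n, P.le i j → P.le j t) :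
    promoOp P ((π.symm i : ℕ)) π ⟨n - 1, Nat.sub_lt hn one_pos⟩ = t := by
  have hjn : (π.symm i : ℕ) < n := (π.symm i).isLt
  have hjle : (π.symm i : ℕ) ≤ n - 1 := by omega
  have hk : (π.symm i : ℕ) + (n - 1 - (π.symm i : ℕ)) < n := by omega
  obtain ⟨-, -, -, hD⟩ := promo_key P π hπ i t ht.1 ht.2 (n - 1 - (π.symm i : ℕ)) hk
  have hop : promoOp P ((π.symm i : ℕ)) π
      = promoFold P ((π.symm i : ℕ)) (n - 1 - (π.symm i : ℕ)) π := rfl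
  have hpos : (⟨(π.symm i : ℕ) + (n - 1 - (π.symm i : ℕ)), hk⟩ : Fin n)
      = ⟨n - 1, Nat.sub_lt hn one_pos⟩ := by
    ext; simp; omega
  rw [hop, ← hpos]
  rcases hD with hD | hD
  · exact hD
  · exfalso
    have := (π.symm t).isLt
    omega
end

section
/- A finite monoid M is weakly ordered if and only if M is R-trivial. -/
section Aux

variable {M : Type} [Monoid M]

/-- In an R-trivial monoid, `x * (a * b) = x` implies `x * a = x`. -/
lemma rkey (hR : ∀ x y : M, Set.range (fun u => x * u) = Set.range (fun u => y * u) → x = y)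
    (x a b : M) (h : x * (a * b) = x) : x * a = x := by
  have hr : Set.range (fun u => x * u) = Set.range (fun u => (x * a) * u) := by
    ext z
    constructor
    · rintro ⟨u, rfl⟩
      refine ⟨b * u, ?_⟩
      show x * a * (b * u) = x * u
      rw [mul_assoc, ← mul_assoc a b u, ← mul_assoc, h]
    · rintro ⟨u, rfl⟩
      exact ⟨a * u, (mul_assoc x a u).symm⟩
  exact (hR x (x * a) hr).symm

lemma prod_stab (x : M) : ∀ l : List M, (∀ y ∈ l, x * y = x) → x * l.prod = x
  | [], _ => by simp
  | y :: l, h => by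
    rw [List.prod_cons, ← mul_assoc, h y (by simp)]
    exact prod_stab x l (fun z hz => h z (by simp [hz]))

lemma prod_split (hR : ∀ x y : M, Set.range (fun u => x * u) = Set.range (fun u => y * u) → x = y)
    (x : M) : ∀ l : List M, x * l.prod = x → ∀ y ∈ l, x * y = x := by
  intro l
  induction l with
  | nil => simp
  | cons a l ih =>
    intro h y hy
    rw [List.prod_cons] at h
    have hxa : x * a = x := rkey hR x a l.prod h
    have hl : x * l.prod = x := by
      calc x * l.prod = x * a * l.prod := by rw [hxa]
      _ = x := by rw [mul_assoc]; exact h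
    rcases List.mem_cons.mp hy with rfl | hy'
    · exact hxa
    · exact ih hl y hy'

end Aux

/-- A finite monoid `M` is weakly ordered if and only if it is `R`-trivial. -/
theorem weaklyOrdered_iff_rTrivial (M : Type) [Monoid M] [Fintype M] :
    (∃ (L : Type) (instL : SemilatticeSup L) (_ : Fintype L) (supp des : M → L),
      Function.Surjective supp ∧
      (∀ x y : M, supp (x * y) = instL.sup (supp x) (supp y)) ∧
      (∀ x : M, instL.sup (supp 1) (supp x) = supp x) ∧
      (∀ x y : M, (∃ u : M, x * y * u = x) → instL.le (supp y) (des x)) ∧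
      (∀ x y : M, instL.le (supp y) (des x) → x * y = x)) ↔
    (∀ x y : M, Set.range (fun u => x * u) = Set.range (fun u => y * u) → x = y) := by
  constructor
  · rintro ⟨L, instL, _, supp, des, -, -, -, h4, h5⟩ x y hxy
    have hy : y ∈ Set.range (fun u => x * u) := by
      rw [hxy]; exact ⟨1, mul_one y⟩
    obtain ⟨v, hv⟩ := hy
    have hx : x ∈ Set.range (fun u => y * u) := by
      rw [← hxy]; exact ⟨1, mul_one x⟩
    obtain ⟨u, hu⟩ := hx
    have hxvu : x * v * u = x := by
      show x * v * u = x
      have : (fun u => x * u) v = y := hv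
      simp only at this
      rw [this]; exact hu
    have hle := h4 x v ⟨u, hxvu⟩
    have hxv : x * v = x := h5 x v hle
    have : (fun u => x * u) v = y := hv
    simp only at this
    rw [← this, hxv]
  · intro hR
    classical
    set S : M → Finset M := fun y => Finset.univ.filter (fun x => x * y ≠ x) with hSdef
    have memS : ∀ y x : M, x ∈ S y ↔ x * y ≠ x := by
      intro y x; simp [hSdef]
    have Smul : ∀ y z : M, S (y * z) = S y ∪ S z := by
      intro y z
      ext x
      simp only [memS, Finset.mem_union]
      have heq : x * (y * z) = x ↔ (x * y = x ∧ x * z = x) := by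
        constructor
        · intro h
          have h1 := rkey hR x y z h
          refine ⟨h1, ?_⟩
          calc x * z = x * y * z := by rw [h1]
          _ = x := by rw [mul_assoc]; exact h
        · rintro ⟨h1, h2⟩
          rw [← mul_assoc, h1, h2]
      simp only [ne_eq]
      rw [heq, not_and_or]
    let L : Type := {s : Finset M // ∃ y : M, s = S y}
    let instL : SemilatticeSup L :=
      { le := fun a b => a.1 ⊆ b.1
        le_refl := fun a => Finset.Subset.refl a.1
        le_trans := fun a b c hab hbc => Finset.Subset.trans hab hbc
        le_antisymm := fun a b hab hba => Subtype.ext (Finset.Subset.antisymm hab hba)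
        sup := fun a b => ⟨a.1 ∪ b.1, by
          obtain ⟨ya, hya⟩ := a.2
          obtain ⟨yb, hyb⟩ := b.2
          exact ⟨ya * yb, by rw [Smul, hya, hyb]⟩⟩
        le_sup_left := fun a b => Finset.subset_union_left
        le_sup_right := fun a b => Finset.subset_union_right
        sup_le := fun a b c hac hbc => Finset.union_subset hac hbc }
    haveI : Fintype L := Fintype.ofFinite L
    let supp : M → L := fun y => ⟨S y, ⟨y, rfl⟩⟩
    let d : M → M := fun x => (Finset.univ.filter (fun y => x * y = x)).toList.prod
    let des : M → L := fun x => supp (d x)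
    refine ⟨L, instL, inferInstance, supp, des, ?_, ?_, ?_, ?_, ?_⟩
    · rintro ⟨s, y, rfl⟩
      exact ⟨y, rfl⟩
    · intro x y
      exact Subtype.ext (Smul x y)
    · intro x
      exact Subtype.ext (by show S 1 ∪ S x = S x; rw [← Smul, one_mul])
    · intro x y hex
      obtain ⟨u, hu⟩ := hex
      have hxy : x * y = x := rkey hR x y u (by rw [← mul_assoc]; exact hu)
      show S y ⊆ S (d x)
      intro a ha
      rw [memS] at ha ⊢
      intro hcon
      have hmem : y ∈ (Finset.univ.filter (fun y => x * y = x)).toList :=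
        Finset.mem_toList.mpr (Finset.mem_filter.mpr ⟨Finset.mem_univ y, hxy⟩)
      exact ha (prod_split hR a _ hcon y hmem)
    · intro x y h
      have hle : S y ⊆ S (d x) := h
      have hdx : x * d x = x := by
        refine prod_stab x _ (fun z hz => ?_)
        exact (Finset.mem_filter.mp (Finset.mem_toList.mp hz)).2
      by_contra hne
      have hx : x ∈ S y := (memS y x).mpr hne
      have := (memS (d x) x).mp (hle hx)
      exact this hdx
end
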